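/- arXiv:2604.06087 — 8 statements merged into one kernel-verified Lean document; each statement's English description precedes it below -/
import Mathlib

section
/- Let (V, L, s, t) be a connected lattice and A an additive commutative group. A configuration q : V → A lies in the image of the divergence map ∇ : (L → A) → (V → A) if and only if ∑_{v ∈ V} q v = 0. (This expresses that on a closed connected lattice the Gauss law map is surjective onto exactly the globally neutral vertex charge configurations.) -/
open Finset

/-- The divergence map of a lattice: `(∇ k) v` is the sum of `k` over links
with source `v` minus the sum of `k` over links with target `v`. -/
def divergence {V L : Type*} [Fintype L] [DecidableEq V] {A : Type*} [AddCommGroup A]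
    (s t : L → V) (k : L → A) : V → A :=
  fun v => (∑ ℓ ∈ univ.filter fun ℓ => s ℓ = v, k ℓ) -
    ∑ ℓ ∈ univ.filter fun ℓ => t ℓ = v, k ℓ

/-- The simple graph on the vertices of a lattice: two distinct vertices are adjacent
whenever some link has them as its source and target (in either order). -/
def latticeGraph {V L : Type*} (s t : L → V) : SimpleGraph V :=
  SimpleGraph.fromRel fun v w => ∃ ℓ, s ℓ = v ∧ t ℓ = w

/-! A charge `q` with `∑ v, q v = 0` is the sum over `v` of the dipoles
`Pi.single v (q v) - Pi.single v₀ (q v)`. The divergence of a single link `ℓ` carrying `a` is the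
dipole between its endpoints, and dipoles compose along walks, so connectedness puts every such
dipole in the image of `∇`. Conversely every link contributes `a - a` to the total charge. -/

section Divergence

variable {V L A : Type*} [Fintype L] [DecidableEq V] [AddCommGroup A]

theorem sum_divergence [Fintype V] (s t : L → V) (k : L → A) :
    ∑ v, divergence s t k v = 0 := by
  simp only [divergence, sum_sub_distrib, sum_fiberwise, sub_self]

variable (A) in
def divergenceHom (s t : L → V) : (L → A) →+ (V → A) :=
  AddMonoidHom.mk' (divergence s t) fun k k' => by
    funext v
    simp only [divergence, Pi.add_apply, sum_add_distrib]
    abel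

theorem divergence_single [DecidableEq L] (s t : L → V) (ℓ : L) (a : A) :
    divergence s t (Pi.single ℓ a) = Pi.single (s ℓ) a - Pi.single (t ℓ) a := by
  funext v
  simp [divergence, Pi.single_apply, eq_comm]

theorem single_sub_single_mem_range_of_adj (s t : L → V) {v w : V}
    (h : (latticeGraph s t).Adj v w) (a : A) :
    Pi.single v a - Pi.single w a ∈ (divergenceHom A s t).range := by
  classical
  obtain ⟨-, ⟨ℓ, rfl, rfl⟩ | ⟨ℓ, rfl, rfl⟩⟩ := h
  · exact ⟨Pi.single ℓ a, divergence_single s t ℓ a⟩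
  · exact ⟨-Pi.single ℓ a, by
      rw [map_neg, divergenceHom, AddMonoidHom.mk'_apply, divergence_single, neg_sub]⟩

theorem single_sub_single_mem_range_of_reachable (s t : L → V) {v w : V}
    (h : (latticeGraph s t).Reachable v w) (a : A) :
    Pi.single v a - Pi.single w a ∈ (divergenceHom A s t).range := by
  obtain ⟨p⟩ := h
  induction p with
  | nil => simp
  | cons hadj _ ih =>
    rw [← sub_add_sub_cancel]
    exact add_mem (single_sub_single_mem_range_of_adj s t hadj a) ih

end Divergence

theorem sum_single_sub_single_eq {V A : Type*} [Fintype V] [DecidableEq V] [AddCommGroup A]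
    {q : V → A} (hq : ∑ v, q v = 0) (v₀ : V) :
    ∑ v, (Pi.single v (q v) - Pi.single v₀ (q v)) = q := by
  rw [sum_sub_distrib, univ_sum_single]
  have : ∑ v, Pi.single v₀ (q v) = Pi.single (M := fun _ => A) v₀ (∑ v, q v) :=
    (map_sum (AddMonoidHom.single (fun _ => A) v₀) q univ).symm
  rw [this, hq, Pi.single_zero, sub_zero]

/-- On a connected closed lattice, a vertex charge configuration `q` lies in the image of
the divergence (Gauss law) map if and only if it is globally neutral: `∑ v, q v = 0`. -/
theorem divergence_surjective_iff_neutral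
    {V L : Type*} [Fintype V] [Fintype L] [DecidableEq V]
    (s t : L → V)
    (hconn : Nonempty V ∧ (latticeGraph s t).Connected)
    {A : Type*} [AddCommGroup A] (q : V → A) :
    (∃ k : L → A, divergence s t k = q) ↔ ∑ v, q v = 0 := by
  refine ⟨fun ⟨k, hk⟩ => hk ▸ sum_divergence s t k, fun hq => ?_⟩
  obtain ⟨v₀⟩ := hconn.1
  have hdipoles : ∀ v, Pi.single v (q v) - Pi.single v₀ (q v) ∈ (divergenceHom A s t).range :=
    fun v => single_sub_single_mem_range_of_reachable s t (hconn.2 v v₀) (q v)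
  rw [← sum_single_sub_single_eq hq v₀]
  exact sum_mem fun v _ => hdipoles v
end

section
/- Let (V, T, s, t) be a lattice that is a tree (i.e., it is connected and |T| = |V| − 1), let v₀ ∈ V, and let G be a group. Then the map {h : V → G | h v₀ = 1} → (T → G) sending h to the function ℓ ↦ h (s ℓ) * (h (t ℓ))⁻¹ is a bijection. (This expresses that the spanning-tree quantum reference frame is ideal and complete: the gauge can be completely and uniquely fixed on a tree relative to the root.) -/
open Finset

section Aux

variable {V : Type*}

private lemma reachable_del {G : SimpleGraph V} {v w : V}
    (hr : (G \ SimpleGraph.fromEdgeSet {s(v, w)}).Reachable v w) :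
    ∀ {a b : V}, G.Walk a b → (G \ SimpleGraph.fromEdgeSet {s(v, w)}).Reachable a b := by
  intro a b p
  induction p with
  | nil => exact SimpleGraph.Reachable.refl _
  | @cons x y z hxy q ih =>
    refine SimpleGraph.Reachable.trans ?_ ih
    by_cases he : s(x, y) = s(v, w)
    · rw [Sym2.eq_iff] at he
      rcases he with ⟨rfl, rfl⟩ | ⟨rfl, rfl⟩
      · exact hr
      · exact hr.symm
    · refine SimpleGraph.Adj.reachable ?_
      simp only [SimpleGraph.sdiff_adj, SimpleGraph.fromEdgeSet_adj, Set.mem_singleton_iff]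
      exact ⟨hxy, fun hc => he hc.1⟩

private lemma connected_card_le [Fintype V] (G : SimpleGraph V) (h : G.Connected) :
    Fintype.card V ≤ G.edgeSet.ncard + 1 := by
  classical
  generalize hn : G.edgeSet.ncard = n
  induction n using Nat.strong_induction_on generalizing G with
  | _ n ih =>
    by_cases hac : G.IsAcyclic
    · have htree : G.IsTree := ⟨h, hac⟩
      haveI : Fintype G.edgeSet := Fintype.ofFinite _
      have hc := htree.card_edgeFinset
      have : G.edgeSet.ncard = G.edgeFinset.card := by
        rw [Set.ncard_eq_toFinset_card']
        congr 1
      omega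
    · rw [SimpleGraph.isAcyclic_iff_forall_edge_isBridge] at hac
      push_neg at hac
      obtain ⟨e, he, hnb⟩ := hac
      induction e using Sym2.ind with
      | _ v w =>
      have hadj := (SimpleGraph.mem_edgeSet _).mp he
      have hr : (G \ SimpleGraph.fromEdgeSet {s(v, w)}).Reachable v w := by
        by_contra hcon
        exact hnb hcon
      set G' := G \ SimpleGraph.fromEdgeSet {s(v, w)} with hG'
      have hconn' : G'.Connected := by
        haveI : Nonempty V := h.nonempty
        refine SimpleGraph.Connected.mk ?_
        intro a b
        exact SimpleGraph.Reachable.elim (h.preconnected a b) fun p => reachable_del hr p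
      have hes : G'.edgeSet = G.edgeSet \ {s(v, w)} := by
        rw [hG', SimpleGraph.edgeSet_sdiff, SimpleGraph.edgeSet_fromEdgeSet,
          SimpleGraph.edgeSet_sdiff_sdiff_isDiag]
      have hfin : G.edgeSet.Finite := Set.toFinite _
      have hcard' : G'.edgeSet.ncard = n - 1 := by
        rw [hes, Set.ncard_diff_singleton_of_mem he, hn]
      have hpos : 0 < n := by
        rw [← hn]
        exact (Set.ncard_pos hfin).mpr ⟨_, he⟩
      have := ih (n - 1) (by omega) G' hconn' hcard'
      omega

private lemma isTree_of_connected_of_card [Fintype V] (G : SimpleGraph V) (h : G.Connected)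
    (hle : G.edgeSet.ncard + 1 ≤ Fintype.card V) : G.IsTree := by
  classical
  refine ⟨h, ?_⟩
  by_contra hac
  rw [SimpleGraph.isAcyclic_iff_forall_edge_isBridge] at hac
  push_neg at hac
  obtain ⟨e, he, hnb⟩ := hac
  induction e using Sym2.ind with
  | _ v w =>
  have hadj := (SimpleGraph.mem_edgeSet _).mp he
  have hr : (G \ SimpleGraph.fromEdgeSet {s(v, w)}).Reachable v w := by
    by_contra hcon
    exact hnb hcon
  set G' := G \ SimpleGraph.fromEdgeSet {s(v, w)} with hG'
  have hconn' : G'.Connected := by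
    haveI : Nonempty V := h.nonempty
    refine SimpleGraph.Connected.mk ?_
    intro a b
    exact SimpleGraph.Reachable.elim (h.preconnected a b) fun p => reachable_del hr p
  have hes : G'.edgeSet = G.edgeSet \ {s(v, w)} := by
    rw [hG', SimpleGraph.edgeSet_sdiff, SimpleGraph.edgeSet_fromEdgeSet,
      SimpleGraph.edgeSet_sdiff_sdiff_isDiag]
  have hfin : G.edgeSet.Finite := Set.toFinite _
  have hcard' : G'.edgeSet.ncard = G.edgeSet.ncard - 1 := by
    rw [hes, Set.ncard_diff_singleton_of_mem he]
  have hpos : 0 < G.edgeSet.ncard := (Set.ncard_pos hfin).mpr ⟨_, he⟩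
  have := connected_card_le G' hconn'
  omega

private def walkWt {V G₀ : Type*} [Group G₀] {Gr : SimpleGraph V} (g : V → V → G₀)
    {a b : V} (p : Gr.Walk a b) : G₀ :=
  ((p.darts.map fun d => g d.toProd.1 d.toProd.2).reverse).prod

private lemma walkWt_nil {V G₀ : Type*} [Group G₀] {Gr : SimpleGraph V} (g : V → V → G₀)
    {a : V} : walkWt g (SimpleGraph.Walk.nil : Gr.Walk a a) = 1 := by
  simp [walkWt]

private lemma walkWt_cons {V G₀ : Type*} [Group G₀] {Gr : SimpleGraph V} (g : V → V → G₀)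
    {a b c : V} (h : Gr.Adj a b) (p : Gr.Walk b c) :
    walkWt g (SimpleGraph.Walk.cons h p) = walkWt g p * g a b := by
  simp [walkWt, SimpleGraph.Walk.darts_cons, List.reverse_cons, List.prod_append]

private lemma walkWt_append {V G₀ : Type*} [Group G₀] {Gr : SimpleGraph V} (g : V → V → G₀)
    {a b c : V} (p : Gr.Walk a b) (q : Gr.Walk b c) :
    walkWt g (p.append q) = walkWt g q * walkWt g p := by
  induction p with
  | nil => rw [walkWt_nil]; simp
  | cons h p ih =>
    rw [SimpleGraph.Walk.cons_append, walkWt_cons, walkWt_cons, ih, mul_assoc]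

private lemma walkWt_concat {V G₀ : Type*} [Group G₀] {Gr : SimpleGraph V} (g : V → V → G₀)
    {a b c : V} (p : Gr.Walk a b) (h : Gr.Adj b c) :
    walkWt g (p.concat h) = g b c * walkWt g p := by
  rw [SimpleGraph.Walk.concat_eq_append, walkWt_append, walkWt_cons, walkWt_nil, one_mul]

end Aux

/-- On a lattice that is a tree (connected with `|T| = |V| - 1` links), gauge fixing
relative to a root `v₀` is complete and unique: the map sending a gauge parameter `h`
with `h v₀ = 1` to the induced link configuration `ℓ ↦ h (s ℓ) * (h (t ℓ))⁻¹` is a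
bijection onto all `G`-valued link configurations on the tree. -/
theorem tree_gauge_fixing_bijective
    {V T : Type*} [Fintype V] [Fintype T]
    (s t : T → V)
    (hconn : Nonempty V ∧ (latticeGraph s t).Connected)
    (hcard : Fintype.card T = Fintype.card V - 1)
    (v₀ : V) (G : Type*) [Group G] :
    Function.Bijective
      (fun h : {h : V → G // h v₀ = 1} =>
        (fun ℓ : T => h.1 (s ℓ) * (h.1 (t ℓ))⁻¹ : T → G)) := by
  classical
  obtain ⟨hne, hc⟩ := hconn
  set Gr := latticeGraph s t with hGr
  have hVpos : 0 < Fintype.card V := Fintype.card_pos_iff.mpr hne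
  -- the edge map
  set e : T → Sym2 V := fun ℓ => s(s ℓ, t ℓ) with he
  have hadj_iff : ∀ a b : V, Gr.Adj a b ↔
      a ≠ b ∧ ((∃ ℓ, s ℓ = a ∧ t ℓ = b) ∨ (∃ ℓ, s ℓ = b ∧ t ℓ = a)) := by
    intro a b
    rw [hGr, latticeGraph, SimpleGraph.fromRel_adj]
  haveI : Fintype Gr.edgeSet := Fintype.ofFinite _
  have hsub : Gr.edgeFinset ⊆ Finset.image e Finset.univ := by
    intro x hx
    rw [SimpleGraph.mem_edgeFinset] at hx
    induction x using Sym2.ind with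
    | _ a b =>
    rw [SimpleGraph.mem_edgeSet, hadj_iff] at hx
    rcases hx.2 with ⟨ℓ, hs, ht⟩ | ⟨ℓ, hs, ht⟩
    · exact Finset.mem_image.mpr ⟨ℓ, Finset.mem_univ _, by rw [he]; simp [hs, ht]⟩
    · exact Finset.mem_image.mpr ⟨ℓ, Finset.mem_univ _,
        by rw [he]; simp only [hs, ht]; exact Sym2.eq_swap⟩
  have hncard : Gr.edgeSet.ncard = Gr.edgeFinset.card := by
    rw [Set.ncard_eq_toFinset_card']
    congr 1
  have hlb := connected_card_le Gr hc
  have himle : (Finset.image e Finset.univ).card ≤ Fintype.card T :=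
    le_trans Finset.card_image_le (by simp)
  have hEle : Gr.edgeFinset.card ≤ Fintype.card T :=
    le_trans (Finset.card_le_card hsub) himle
  have hEcard : Gr.edgeFinset.card = Fintype.card V - 1 := by omega
  have himcard : (Finset.image e Finset.univ).card = Fintype.card T := by
    have := Finset.card_le_card hsub
    omega
  have hinj : Function.Injective e := by
    have hinjOn : Set.InjOn e ↑(Finset.univ : Finset T) := by
      rw [← Finset.card_image_iff]
      simp [himcard]
    intro a b hab
    exact hinjOn (by simp) (by simp) hab
  have himeq : Finset.image e Finset.univ = Gr.edgeFinset := by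
    refine (Finset.eq_of_subset_of_card_le hsub (by omega)).symm
  have hadj_link : ∀ ℓ, Gr.Adj (s ℓ) (t ℓ) := by
    intro ℓ
    have : e ℓ ∈ Gr.edgeFinset := by
      rw [← himeq]
      exact Finset.mem_image_of_mem e (Finset.mem_univ ℓ)
    rw [SimpleGraph.mem_edgeFinset, he] at this
    exact (SimpleGraph.mem_edgeSet _).mp this
  have hloop : ∀ ℓ, s ℓ ≠ t ℓ := fun ℓ => (hadj_link ℓ).ne
  have hkey_link : ∀ ℓ ℓ' : T,
      (s ℓ' = s ℓ ∧ t ℓ' = t ℓ) ∨ (s ℓ' = t ℓ ∧ t ℓ' = s ℓ) → ℓ' = ℓ := by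
    intro ℓ ℓ' hor
    apply hinj
    rw [he]
    rcases hor with ⟨h1, h2⟩ | ⟨h1, h2⟩
    · simp [h1, h2]
    · simp only [h1, h2]; exact Sym2.eq_swap
  have htree : Gr.IsTree := by
    refine isTree_of_connected_of_card Gr hc ?_
    omega
  constructor
  · -- injectivity
    rintro ⟨h₁, hh₁⟩ ⟨h₂, hh₂⟩ heq
    simp only at heq
    have hl : ∀ ℓ, h₁ (s ℓ) * (h₁ (t ℓ))⁻¹ = h₂ (s ℓ) * (h₂ (t ℓ))⁻¹ := fun ℓ =>
      congrFun heq ℓ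
    set f : V → G := fun v => (h₂ v)⁻¹ * h₁ v with hf
    have hstep : ∀ a b : V, Gr.Adj a b → f a = f b := by
      intro a b hadj
      have key : ∀ ℓ, f (s ℓ) = f (t ℓ) := by
        intro ℓ
        have h := hl ℓ
        have h' : h₁ (s ℓ) = h₂ (s ℓ) * (h₂ (t ℓ))⁻¹ * h₁ (t ℓ) :=
          mul_inv_eq_iff_eq_mul.mp h
        rw [hf]
        simp only [h']
        group
      rw [hadj_iff] at hadj
      rcases hadj.2 with ⟨ℓ, hs, ht⟩ | ⟨ℓ, hs, ht⟩
      · rw [← hs, ← ht]; exact key ℓ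
      · rw [← hs, ← ht]; exact (key ℓ).symm
    have hwalk : ∀ {a b : V} (_ : Gr.Walk a b), f a = f b := by
      intro a b p
      induction p with
      | nil => rfl
      | cons h q ih => exact (hstep _ _ h).trans ih
    have hconst : ∀ v, f v = 1 := by
      intro v
      have := hwalk ((hc.preconnected v v₀).some)
      rw [this, hf]
      simp [hh₁, hh₂]
    refine Subtype.ext (funext fun v => ?_)
    have := hconst v
    rw [hf] at this
    simp only at this
    exact (inv_mul_eq_one.mp this).symm
  · -- surjectivity
    intro k
    -- transport along an oriented edge
    set g : V → V → G := fun a b =>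
      if h : ∃ ℓ, s ℓ = a ∧ t ℓ = b then (k h.choose)⁻¹
      else if h' : ∃ ℓ, s ℓ = b ∧ t ℓ = a then k h'.choose
      else 1 with hg
    have hg₁ : ∀ ℓ, g (s ℓ) (t ℓ) = (k ℓ)⁻¹ := by
      intro ℓ
      have hex : ∃ ℓ', s ℓ' = s ℓ ∧ t ℓ' = t ℓ := ⟨ℓ, rfl, rfl⟩
      rw [hg]
      simp only [dif_pos hex]
      have := hkey_link ℓ hex.choose (Or.inl hex.choose_spec)
      rw [this]
    have hg₂ : ∀ ℓ, g (t ℓ) (s ℓ) = k ℓ := by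
      intro ℓ
      have hnex : ¬∃ ℓ', s ℓ' = t ℓ ∧ t ℓ' = s ℓ := by
        rintro ⟨ℓ', h1, h2⟩
        have hll : ℓ' = ℓ := hkey_link ℓ ℓ' (Or.inr ⟨h1, h2⟩)
        subst hll
        exact hloop ℓ' h1
      have hex : ∃ ℓ', s ℓ' = s ℓ ∧ t ℓ' = t ℓ := ⟨ℓ, rfl, rfl⟩
      rw [hg]
      simp only [dif_neg hnex, dif_pos hex]
      have := hkey_link ℓ hex.choose (Or.inl hex.choose_spec)
      rw [this]
    have hgsymm : ∀ a b : V, Gr.Adj a b → g b a = (g a b)⁻¹ := by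
      intro a b hadj
      rw [hadj_iff] at hadj
      rcases hadj.2 with ⟨ℓ, hs, ht⟩ | ⟨ℓ, hs, ht⟩
      · rw [← hs, ← ht, hg₁, hg₂, inv_inv]
      · rw [← hs, ← ht, hg₁, hg₂]
    -- the unique path from the root
    choose P hP hu using fun v => htree.existsUnique_path v₀ v
    have hP' : ∀ v, (P v).IsPath := hP
    have key : ∀ (a b : V) (hadj : Gr.Adj a b), walkWt g (P b) = g a b * walkWt g (P a) := by
      intro a b hadj
      by_cases hb : b ∈ (P a).support
      · have hq := (hP' a).takeUntil hb
        have hr := (hP' a).dropUntil hb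
        have hspec := (P a).take_spec hb
        have hsingle : ((P a).dropUntil b hb) = SimpleGraph.Walk.cons hadj.symm
            SimpleGraph.Walk.nil := by
          obtain ⟨p₀, hp₀, hu₀⟩ := htree.existsUnique_path b a
          have h1 := hu₀ _ hr
          have h2 := hu₀ _ ((SimpleGraph.Path.singleton hadj.symm).2)
          rw [h1]
          rw [SimpleGraph.Path.singleton] at h2
          exact h2.symm
        have hPb : (P a).takeUntil b hb = P b := hu b _ hq
        have : walkWt g (P a) = g b a * walkWt g (P b) := by
          conv_lhs => rw [← hspec]
          rw [walkWt_append g, hsingle, walkWt_cons g, walkWt_nil g, one_mul, hPb]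
        rw [this, hgsymm a b hadj, ← mul_assoc]
        simp
      · have hpath : ((P a).concat hadj).IsPath := by
          rw [← SimpleGraph.Walk.isPath_reverse_iff]
          rw [SimpleGraph.Walk.reverse_concat]
          refine SimpleGraph.Walk.IsPath.cons ?_ ?_
          · exact (SimpleGraph.Walk.isPath_reverse_iff _).mpr (hP' a)
          · rwa [SimpleGraph.Walk.support_reverse, List.mem_reverse]
        have hPb : (P a).concat hadj = P b := hu b _ hpath
        rw [← hPb, walkWt_concat g]
    refine ⟨⟨fun v => walkWt g (P v), ?_⟩, ?_⟩
    · have hnil : SimpleGraph.Walk.nil = P v₀ := hu v₀ SimpleGraph.Walk.nil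
        SimpleGraph.Walk.IsPath.nil
      show walkWt g (P v₀) = 1
      rw [← hnil, walkWt_nil g]
    · funext ℓ
      simp only
      have hk := key (s ℓ) (t ℓ) (hadj_link ℓ)
      rw [hk, hg₁]
      group
end

section
/- For every g : V → G and χ : L → Ĝ, the covariance relation U^g ∘ W^χ = (∏_{v ∈ V} ((∂ χ) v) (g v)) • (W^χ ∘ U^g) holds as an identity of linear maps on H. Equivalently, conjugating a Wilson line operator by a gauge transformation multiplies it by the value of its Gauss law syndrome ∂ χ on the gauge parameter g. -/
open Finset

variable {V L : Type*} [Fintype V] [Fintype L] [DecidableEq V]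
variable {G : Type*} [CommGroup G] [Fintype G]

/-- The gauge transformation `U^g` on the kinematical Hilbert space `(L → G) → ℂ`. -/
def Ugauge (s t : L → V) (g : V → G) : ((L → G) → ℂ) → ((L → G) → ℂ) :=
  fun f a => f fun ℓ => (g (s ℓ))⁻¹ * a ℓ * g (t ℓ)

/-- The Wilson line (multiplication) operator `W^χ` for a family of characters `χ`. -/
def Wline (χ : L → (G →* ℂˣ)) : ((L → G) → ℂ) → ((L → G) → ℂ) :=
  fun f a => (((∏ ℓ, χ ℓ (a ℓ))⁻¹ : ℂˣ) : ℂ) • f a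

/-- The Gauss law map `∂`, assigning to link character data the vertex charge it excites. -/
def gaussMap (s t : L → V) (χ : L → (G →* ℂˣ)) : V → (G →* ℂˣ) :=
  fun v => (∏ ℓ ∈ univ.filter fun ℓ => s ℓ = v, χ ℓ) *
    ∏ ℓ ∈ univ.filter fun ℓ => t ℓ = v, (χ ℓ)⁻¹

/-!
The Wilson line `W^χ` multiplies by the inverse of the character `a ↦ ∏ χ_ℓ(a_ℓ)`, and `U^g` moves
the configuration to `ℓ ↦ g(sℓ)⁻¹ a_ℓ g(tℓ)`. Since each `χ_ℓ` is multiplicative, the character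
at the moved configuration is the old one times `∏_ℓ χ_ℓ(g(sℓ))⁻¹ χ_ℓ(g(tℓ))`, and regrouping
that product by the endpoints of the links gives `(∏_v (∂χ)_v(g_v))⁻¹`.
-/

theorem Finset.prod_fiberwise_apply {ι κ M : Type*} [Fintype κ] [DecidableEq κ] [CommMonoid M]
    (s : Finset ι) (u : ι → κ) (f : ι → κ → M) :
    ∏ j, ∏ i ∈ s with u i = j, f i j = ∏ i ∈ s, f i (u i) := by
  rw [← prod_fiberwise s u fun i => f i (u i)]
  refine prod_congr rfl fun j _ => prod_congr rfl fun i hi => ?_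
  rw [(mem_filter.1 hi).2]

section

variable (s t : L → V) (χ : L → (G →* ℂˣ)) (g : V → G)

omit [Fintype G] in
theorem prod_gaussMap_apply :
    ∏ v, gaussMap s t χ v (g v) = ∏ ℓ, χ ℓ (g (s ℓ)) * (χ ℓ (g (t ℓ)))⁻¹ := by
  simp only [gaussMap, MonoidHom.mul_apply, MonoidHom.finsetProd_apply, MonoidHom.inv_apply,
    prod_mul_distrib, prod_inv_distrib, prod_fiberwise_apply univ s fun ℓ v => χ ℓ (g v),
    prod_fiberwise_apply univ t fun ℓ v => χ ℓ (g v)]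

omit [Fintype G] in
theorem prod_map_gauge_eq_inv_prod_gaussMap_mul (a : L → G) :
    ∏ ℓ, χ ℓ ((g (s ℓ))⁻¹ * a ℓ * g (t ℓ)) =
      (∏ v, gaussMap s t χ v (g v))⁻¹ * ∏ ℓ, χ ℓ (a ℓ) := by
  simp only [prod_gaussMap_apply, map_mul, map_inv, prod_mul_distrib, prod_inv_distrib, mul_inv,
    inv_inv, mul_right_comm _ (∏ ℓ, χ ℓ (g (t ℓ)))]

end

/-- Covariance of Wilson line operators under gauge transformations: conjugating `W^χ` by
a gauge transformation `U^g` multiplies it by the value of its Gauss law syndrome `∂χ`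
on the gauge parameter `g`. -/
theorem wilson_gauge_covariance (s t : L → V) (g : V → G) (χ : L → (G →* ℂˣ)) :
    Ugauge s t g ∘ Wline χ =
      (((∏ v, gaussMap s t χ v (g v)) : ℂˣ) : ℂ) • (Wline χ ∘ Ugauge s t g) := by
  funext f a
  simp only [Function.comp_apply, Ugauge, Wline, Pi.smul_apply, smul_smul, prod_map_gauge_eq_inv_prod_gaussMap_mul,
    mul_inv, inv_inv, Units.val_mul]
end

section
/- (Knill–Laflamme condition for Wilson line errors, Proposition 3.2.) For all η, χ : L → Ĝ the following hold: if ∂ η ≠ ∂ χ then Π_pn ∘ W^{η⁻¹} ∘ W^χ ∘ Π_pn = 0, where η⁻¹ denotes the pointwise inverse family ℓ ↦ (η ℓ)⁻¹ (so that W^{η⁻¹} is the adjoint of W^η); and if ∂ η = ∂ χ then W^{η⁻¹ · χ} commutes with Π_pn and Π_pn ∘ W^{η⁻¹} ∘ W^χ ∘ Π_pn = W^{η⁻¹ · χ} ∘ Π_pn, where η⁻¹ · χ is the pointwise product ℓ ↦ (η ℓ)⁻¹ * χ ℓ. In particular, two Wilson line errors with distinct Gauss law syndromes are perfectly distinguishable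 on the code subspace. -/
/-!
Moving a gauge transformation past a Wilson line costs a phase: `U^g W^ξ = c_ξ(g) • W^ξ U^g`,
where `c_ξ(g) = ∏ v, (∂ ξ) v (g v)` is a character of the gauge group `V → G`, trivial exactly
when `∂ ξ = 1`. Since `U^g Π_pn = Π_pn`, this gives `Π_pn W^ξ Π_pn = (avg c_ξ) • W^ξ Π_pn`, and
orthogonality of characters makes the average `1` or `0`. Apply this to `ξ = η⁻¹ χ`, for which
`W^{η⁻¹} W^χ = W^ξ` and `∂ ξ = (∂ η)⁻¹ ∂ χ`.
-/

open Finset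

variable {V L : Type*} [Fintype V] [Fintype L] [DecidableEq V]
variable {G : Type*} [CommGroup G] [Fintype G]

/-- The projection `Π_pn` onto the gauge-invariant (perspective-neutral) subspace. -/
noncomputable def piPn (s t : L → V) (G : Type*) [CommGroup G] [Fintype G] :
    ((L → G) → ℂ) → ((L → G) → ℂ) :=
  ((Fintype.card G : ℂ) ^ Fintype.card V)⁻¹ • ∑ g : V → G, Ugauge s t g

section

variable {V L G : Type*} [CommGroup G] (s t : L → V)

def gaugeOp (g : V → G) : Module.End ℂ ((L → G) → ℂ) where
  toFun := Ugauge s t g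
  map_add' _ _ := rfl
  map_smul' _ _ := rfl

@[simp]
lemma gaugeOp_apply (g : V → G) (f : (L → G) → ℂ) : gaugeOp s t g f = Ugauge s t g f := rfl

lemma gaugeOp_mul (g h : V → G) : gaugeOp s t g * gaugeOp s t h = gaugeOp s t (g * h) := by
  ext f a
  simp only [Module.End.mul_apply, gaugeOp_apply, Ugauge, Pi.mul_apply, mul_inv]
  congr 1
  funext ℓ
  ac_rfl

section Projection

variable [Fintype V] [DecidableEq V] [Fintype G]

noncomputable def gaugeAverage : Module.End ℂ ((L → G) → ℂ) :=
  ((Fintype.card G : ℂ) ^ Fintype.card V)⁻¹ • ∑ g : V → G, gaugeOp s t g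

lemma coe_gaugeAverage : ⇑(gaugeAverage s t) = piPn s t G := by
  ext f a
  simp [gaugeAverage, piPn, Finset.sum_apply, LinearMap.sum_apply]

lemma gaugeOp_mul_gaugeAverage (g : V → G) :
    gaugeOp s t g * gaugeAverage s t = gaugeAverage s t := by
  simp only [gaugeAverage, mul_smul_comm, Finset.mul_sum, gaugeOp_mul]
  congr 1
  exact Fintype.sum_equiv (Equiv.mulLeft g) _ _ fun _ => rfl

end Projection

variable [Fintype L]

lemma Wline_comp_Wline (η χ : L → (G →* ℂˣ)) : Wline η ∘ Wline χ = Wline (η * χ) := by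
  ext f a
  simp only [Function.comp_apply, Wline, Pi.mul_apply, MonoidHom.mul_apply,
    Finset.prod_mul_distrib, mul_inv, smul_smul, Units.val_mul]

def wilsonOp (χ : L → (G →* ℂˣ)) : Module.End ℂ ((L → G) → ℂ) where
  toFun := Wline χ
  map_add' f₁ f₂ := funext fun a => smul_add _ (f₁ a) (f₂ a)
  map_smul' c f := funext fun a => smul_comm _ c (f a)

@[simp]
lemma wilsonOp_apply (χ : L → (G →* ℂˣ)) (f : (L → G) → ℂ) : wilsonOp χ f = Wline χ f := rfl

lemma gaussMap_apply_apply [DecidableEq V] (ξ : L → (G →* ℂˣ)) (v : V) (x : G) :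
    gaussMap s t ξ v x = (∏ ℓ with s ℓ = v, ξ ℓ x) / ∏ ℓ with t ℓ = v, ξ ℓ x := by
  simp [gaussMap, div_eq_mul_inv, MonoidHom.finsetProd_apply]

lemma gaussMap_inv_mul [DecidableEq V] (η χ : L → (G →* ℂˣ)) :
    gaussMap s t (η⁻¹ * χ) = (gaussMap s t η)⁻¹ * gaussMap s t χ := by
  funext v
  ext x
  simp only [MonoidHom.mul_apply, MonoidHom.inv_apply, Pi.mul_apply, Pi.inv_apply,
    gaussMap_apply_apply, Finset.prod_mul_distrib, Finset.prod_inv_distrib, div_eq_mul_inv,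
    mul_inv, inv_inv]
  ac_rfl

def gaussChar (ξ : L → (G →* ℂˣ)) : (V → G) →* ℂˣ :=
  ∏ ℓ, (ξ ℓ).comp (Pi.evalMonoidHom (fun _ => G) (s ℓ)) /
    (ξ ℓ).comp (Pi.evalMonoidHom (fun _ => G) (t ℓ))

lemma gaussChar_apply (ξ : L → (G →* ℂˣ)) (g : V → G) :
    gaussChar s t ξ g = ∏ ℓ, ξ ℓ (g (s ℓ)) / ξ ℓ (g (t ℓ)) := by
  simp [gaussChar]

lemma gaussChar_mulSingle [DecidableEq V] (ξ : L → (G →* ℂˣ)) (v : V) (x : G) :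
    gaussChar s t ξ (Pi.mulSingle v x) = gaussMap s t ξ v x := by
  have hfiber (u : L → V) :
      ∏ ℓ, ξ ℓ ((Pi.mulSingle v x : V → G) (u ℓ)) = ∏ ℓ with u ℓ = v, ξ ℓ x := by
    rw [Finset.prod_filter]
    simp only [Pi.mulSingle_apply, apply_ite, map_one]
  rw [gaussChar_apply, Finset.prod_div_distrib, hfiber, hfiber, gaussMap_apply_apply]

lemma gaussChar_eq_one_iff [DecidableEq V] [Finite V] (ξ : L → (G →* ℂˣ)) :
    gaussChar s t ξ = 1 ↔ gaussMap s t ξ = 1 := by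
  constructor
  · intro h
    funext v
    ext x
    rw [← gaussChar_mulSingle, h]
    rfl
  · intro h
    refine MonoidHom.functions_ext _ _ _ fun v x => ?_
    rw [gaussChar_mulSingle, h]
    rfl

lemma prod_apply_gauge (ξ : L → (G →* ℂˣ)) (g : V → G) (a : L → G) :
    ∏ ℓ, ξ ℓ ((g (s ℓ))⁻¹ * a ℓ * g (t ℓ)) = (gaussChar s t ξ g)⁻¹ * ∏ ℓ, ξ ℓ (a ℓ) := by
  rw [gaussChar_apply, ← Finset.prod_inv_distrib, ← Finset.prod_mul_distrib]
  refine Finset.prod_congr rfl fun ℓ _ => ?_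
  simp only [map_mul, map_inv, div_eq_mul_inv, mul_inv, inv_inv]
  ac_rfl

lemma gaugeOp_mul_wilsonOp (ξ : L → (G →* ℂˣ)) (g : V → G) :
    gaugeOp s t g * wilsonOp ξ = (gaussChar s t ξ g : ℂ) • (wilsonOp ξ * gaugeOp s t g) := by
  ext f a
  simp only [Module.End.mul_apply, LinearMap.smul_apply, gaugeOp_apply, wilsonOp_apply, Ugauge,
    Wline, prod_apply_gauge, Pi.smul_apply, mul_inv, inv_inv, smul_smul, Units.val_mul]

lemma sum_coe_units_hom {H R : Type*} [Group H] [Fintype H] [CommRing R] [IsDomain R]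
    (φ : H →* Rˣ) [Decidable (φ = 1)] :
    ∑ h, (φ h : R) = if φ = 1 then (Fintype.card H : R) else 0 := by
  classical
  have hcoe : (Units.coeHom R).comp φ = 1 ↔ φ = 1 := by
    rw [← MonoidHom.comp_one (Units.coeHom R), MonoidHom.cancel_left Units.val_injective]
  simpa [hcoe] using sum_hom_units ((Units.coeHom R).comp φ)

variable [Fintype V] [DecidableEq V] [Fintype G]

open Classical in
lemma gaugeAverage_mul_wilsonOp_mul_gaugeAverage (ξ : L → (G →* ℂˣ)) :
    gaugeAverage s t * wilsonOp ξ * gaugeAverage s t =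
      if gaussMap s t ξ = 1 then wilsonOp ξ * gaugeAverage s t else 0 := by
  have hg (g : V → G) : gaugeOp s t g * wilsonOp ξ * gaugeAverage s t =
      (gaussChar s t ξ g : ℂ) • (wilsonOp ξ * gaugeAverage s t) := by
    rw [gaugeOp_mul_wilsonOp, smul_mul_assoc, mul_assoc, gaugeOp_mul_gaugeAverage]
  nth_rewrite 1 [gaugeAverage]
  rw [smul_mul_assoc, smul_mul_assoc, Finset.sum_mul, Finset.sum_mul]
  simp only [hg, ← Finset.sum_smul, smul_smul, sum_coe_units_hom, gaussChar_eq_one_iff]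
  split_ifs
  · rw [Fintype.card_fun, Nat.cast_pow, inv_mul_cancel₀ (by simp), one_smul]
  · simp

lemma wilsonOp_commute_gaugeAverage (ξ : L → (G →* ℂˣ)) (h : gaussMap s t ξ = 1) :
    Commute (wilsonOp ξ) (gaugeAverage s t) := by
  refine (Commute.sum_right _ _ _ fun g _ => ?_).smul_right _
  rw [Commute, SemiconjBy, gaugeOp_mul_wilsonOp, (gaussChar_eq_one_iff s t ξ).2 h]
  simp

open Classical in
lemma piPn_comp_Wline_comp_piPn (ξ : L → (G →* ℂˣ)) :
    piPn s t G ∘ Wline ξ ∘ piPn s t G =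
      if gaussMap s t ξ = 1 then Wline ξ ∘ piPn s t G else 0 := by
  rw [← coe_gaugeAverage]
  have h := congrArg DFunLike.coe (gaugeAverage_mul_wilsonOp_mul_gaugeAverage s t ξ)
  split_ifs at h ⊢ <;> exact h

lemma Wline_comp_piPn_comm (ξ : L → (G →* ℂˣ)) (h : gaussMap s t ξ = 1) :
    Wline ξ ∘ piPn s t G = piPn s t G ∘ Wline ξ := by
  rw [← coe_gaugeAverage]
  exact congrArg DFunLike.coe (wilsonOp_commute_gaugeAverage s t ξ h).eq

end

/-- Knill–Laflamme condition for Wilson line errors (Proposition 3.2): if the Gauss law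
syndromes of `η` and `χ` differ, then `Π_pn ∘ W^{η⁻¹} ∘ W^χ ∘ Π_pn = 0`; if they agree,
then `W^{η⁻¹ · χ}` commutes with `Π_pn` and
`Π_pn ∘ W^{η⁻¹} ∘ W^χ ∘ Π_pn = W^{η⁻¹ · χ} ∘ Π_pn`. -/
theorem knillLaflamme_wilson (s t : L → V) (η χ : L → (G →* ℂˣ)) :
    (gaussMap s t η ≠ gaussMap s t χ →
        piPn s t G ∘ Wline η⁻¹ ∘ Wline χ ∘ piPn s t G = 0) ∧
      (gaussMap s t η = gaussMap s t χ →
        Wline (η⁻¹ * χ) ∘ piPn s t G = piPn s t G ∘ Wline (η⁻¹ * χ) ∧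
          piPn s t G ∘ Wline η⁻¹ ∘ Wline χ ∘ piPn s t G =
            Wline (η⁻¹ * χ) ∘ piPn s t G) := by
  have hsyndrome : gaussMap s t (η⁻¹ * χ) = 1 ↔ gaussMap s t η = gaussMap s t χ := by
    rw [gaussMap_inv_mul]
    exact inv_mul_eq_one (a := gaussMap s t η)
  have hsandwich : piPn s t G ∘ Wline η⁻¹ ∘ Wline χ ∘ piPn s t G =
      piPn s t G ∘ Wline (η⁻¹ * χ) ∘ piPn s t G := by
    rw [← Wline_comp_Wline]
    rfl
  rw [hsandwich, piPn_comp_Wline_comp_piPn]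
  exact ⟨fun hne => if_neg (hsyndrome.not.2 hne),
    fun heq => ⟨Wline_comp_piPn_comm s t _ (hsyndrome.2 heq), if_pos (hsyndrome.2 heq)⟩⟩
end

section
/- (Maximal correctable error sets from sections of the Gauss law map.) Let Q₀ := {q : V → Ĝ | ∏_{v ∈ V} q v = 1} denote the set of neutral charge configurations and let s : Q₀ → (L → Ĝ) satisfy ∂ (s q) = q for every q ∈ Q₀ (a global section of the Gauss law map over neutral configurations). Then: (i) for all q, q' ∈ Q₀, Π_pn ∘ W^{(s q)⁻¹} ∘ W^{s q'} ∘ Π_pn equals Π_pn if q = q' and equals 0 otherwise — i.e., the Wilson line error family {W^{s q}}_{q ∈ Q₀} satisfies the Knill–Laflamme condition with matrix C equal to the identity; and (ii) the error spaces W^{s q} (H_pn), q ∈ Q₀, are pairwise orthogonal subspaces of H whose sum is all of H, so the error set is maximal. -/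
open Finset

variable {V L : Type*} [Fintype V] [Fintype L] [DecidableEq V] [DecidableEq L]
variable {G : Type*} [CommGroup G] [Fintype G]

/-- The gauge-invariant (perspective-neutral) subspace, i.e. the code subspace. -/
def Hpn (s t : L → V) (G : Type*) [CommGroup G] : Set ((L → G) → ℂ) :=
  {f | ∀ g : V → G, Ugauge s t g f = f}

set_option linter.unusedSectionVars false

section Aux

variable (s t : L → V)

lemma Ugauge_smul (g : V → G) (c : ℂ) (f : (L → G) → ℂ) :
    Ugauge s t g (c • f) = c • Ugauge s t g f := rfl

lemma Ugauge_sum {ι : Type*} (g : V → G) (S : Finset ι) (f : ι → ((L → G) → ℂ)) :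
    Ugauge s t g (∑ i ∈ S, f i) = ∑ i ∈ S, Ugauge s t g (f i) := by
  funext a; simp [Ugauge, Finset.sum_apply]

lemma Ugauge_comp (g h : V → G) (f : (L → G) → ℂ) :
    Ugauge s t g (Ugauge s t h f) = Ugauge s t (g * h) f := by
  funext a
  simp only [Ugauge, Pi.mul_apply, mul_inv]
  congr 1
  funext ℓ
  simp [mul_assoc, mul_comm, mul_left_comm]

lemma Ugauge_of_const {g : V → G} (hg : ∀ v w, g v = g w) (f : (L → G) → ℂ) :
    Ugauge s t g f = f := by
  funext a
  simp only [Ugauge]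
  congr 1
  funext ℓ
  rw [hg (t ℓ) (s ℓ), mul_comm ((g (s ℓ))⁻¹) (a ℓ), mul_assoc, inv_mul_cancel, mul_one]

lemma piPn_apply (f : (L → G) → ℂ) :
    piPn s t G f = ((Fintype.card G : ℂ) ^ Fintype.card V)⁻¹ •
      ∑ g : V → G, Ugauge s t g f := by
  simp only [piPn, Pi.smul_apply, Finset.sum_apply]

lemma Ugauge_piPn (g : V → G) (f : (L → G) → ℂ) :
    Ugauge s t g (piPn s t G f) = piPn s t G f := by
  rw [piPn_apply, Ugauge_smul, Ugauge_sum]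
  congr 1
  refine Fintype.sum_equiv (Equiv.mulLeft g) _ _ fun h => ?_
  rw [Ugauge_comp]
  rfl

lemma cardc_ne_zero : ((Fintype.card G : ℂ) ^ Fintype.card V) ≠ 0 :=
  pow_ne_zero _ (Nat.cast_ne_zero.mpr Fintype.card_ne_zero)

lemma piPn_idem (f : (L → G) → ℂ) :
    piPn s t G (piPn s t G f) = piPn s t G f := by
  rw [piPn_apply (f := piPn s t G f)]
  rw [Finset.sum_congr rfl fun g _ => Ugauge_piPn s t g f]
  rw [Finset.sum_const, Finset.card_univ, Fintype.card_fun,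
    ← Nat.cast_smul_eq_nsmul ℂ, smul_smul, Nat.cast_pow,
    inv_mul_cancel₀ (cardc_ne_zero (V := V) (G := G)), one_smul]

lemma prod_char_gauge (χ : L → (G →* ℂˣ)) (g : V → G) (a : L → G) :
    (∏ ℓ, χ ℓ ((g (s ℓ))⁻¹ * a ℓ * g (t ℓ))) =
      (∏ v, gaussMap s t χ v (g v))⁻¹ * ∏ ℓ, χ ℓ (a ℓ) := by
  have hs : (∏ v, (∏ ℓ ∈ univ.filter fun ℓ => s ℓ = v, χ ℓ) (g v)) =
      ∏ ℓ, χ ℓ (g (s ℓ)) := by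
    simp only [MonoidHom.finset_prod_apply]
    rw [← Finset.prod_fiberwise univ s (fun ℓ => χ ℓ (g (s ℓ)))]
    exact Finset.prod_congr rfl fun v _ => Finset.prod_congr rfl fun ℓ hℓ => by
      rw [(Finset.mem_filter.mp hℓ).2]
  have ht : (∏ v, (∏ ℓ ∈ univ.filter fun ℓ => t ℓ = v, (χ ℓ)⁻¹) (g v)) =
      ∏ ℓ, (χ ℓ (g (t ℓ)))⁻¹ := by
    simp only [MonoidHom.finset_prod_apply, MonoidHom.inv_apply]
    rw [← Finset.prod_fiberwise univ t (fun ℓ => (χ ℓ (g (t ℓ)))⁻¹)]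
    exact Finset.prod_congr rfl fun v _ => Finset.prod_congr rfl fun ℓ hℓ => by
      rw [(Finset.mem_filter.mp hℓ).2]
  have expand : (∏ ℓ, χ ℓ ((g (s ℓ))⁻¹ * a ℓ * g (t ℓ))) =
      ((∏ ℓ, χ ℓ (g (s ℓ)))⁻¹ * (∏ ℓ, χ ℓ (a ℓ))) * ∏ ℓ, χ ℓ (g (t ℓ)) := by
    rw [← Finset.prod_inv_distrib, ← Finset.prod_mul_distrib, ← Finset.prod_mul_distrib]
    exact Finset.prod_congr rfl fun ℓ _ => by rw [map_mul, map_mul, map_inv]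
  have gm : (∏ v, gaussMap s t χ v (g v)) =
      (∏ ℓ, χ ℓ (g (s ℓ))) * (∏ ℓ, χ ℓ (g (t ℓ)))⁻¹ := by
    simp only [gaussMap, MonoidHom.mul_apply]
    rw [Finset.prod_mul_distrib, hs, ht, Finset.prod_inv_distrib]
  rw [expand, gm]
  simp [mul_inv, inv_inv, mul_comm, mul_left_comm, mul_assoc]

lemma Wline_smul (χ : L → (G →* ℂˣ)) (c : ℂ) (f : (L → G) → ℂ) :
    Wline χ (c • f) = c • Wline χ f := by
  funext a
  simp only [Wline, Pi.smul_apply, smul_eq_mul]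
  ring

lemma Wline_sum {ι : Type*} (χ : L → (G →* ℂˣ)) (S : Finset ι) (f : ι → ((L → G) → ℂ)) :
    Wline χ (∑ i ∈ S, f i) = ∑ i ∈ S, Wline χ (f i) := by
  funext a
  simp [Wline, Finset.sum_apply, Finset.mul_sum]

lemma Wline_Wline (χ ψ : L → (G →* ℂˣ)) (f : (L → G) → ℂ) :
    Wline χ (Wline ψ f) = Wline (χ * ψ) f := by
  funext a
  simp only [Wline, Pi.mul_apply, MonoidHom.mul_apply, smul_eq_mul,
    Finset.prod_mul_distrib, mul_inv, Units.val_mul]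
  ring

lemma Wline_one (f : (L → G) → ℂ) : Wline (1 : L → (G →* ℂˣ)) f = f := by
  funext a
  simp [Wline]

lemma Wline_inv_cancel (χ : L → (G →* ℂˣ)) (f : (L → G) → ℂ) :
    Wline χ⁻¹ (Wline χ f) = f := by
  rw [Wline_Wline, show χ⁻¹ * χ = 1 from inv_mul_cancel χ, Wline_one]

lemma Wline_cancel_inv (χ : L → (G →* ℂˣ)) (f : (L → G) → ℂ) :
    Wline χ (Wline χ⁻¹ f) = f := by
  rw [Wline_Wline, show χ * χ⁻¹ = 1 from mul_inv_cancel χ, Wline_one]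

lemma Ugauge_Wline (g : V → G) (χ : L → (G →* ℂˣ)) (f : (L → G) → ℂ) :
    Ugauge s t g (Wline χ f) =
      ((∏ v, gaussMap s t χ v (g v) : ℂˣ) : ℂ) • Wline χ (Ugauge s t g f) := by
  funext a
  simp only [Ugauge, Wline, Pi.smul_apply, smul_eq_mul]
  rw [prod_char_gauge]
  simp only [mul_inv, inv_inv, Units.val_mul]
  ring

lemma gaussMap_mul (χ ψ : L → (G →* ℂˣ)) :
    gaussMap s t (χ * ψ) = gaussMap s t χ * gaussMap s t ψ := by
  funext v
  ext x
  simp only [gaussMap, Pi.mul_apply, MonoidHom.mul_apply, MonoidHom.finset_prod_apply,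
    MonoidHom.inv_apply]
  simp [Finset.prod_mul_distrib, mul_inv, mul_comm, mul_left_comm, mul_assoc]

lemma gaussMap_inv (χ : L → (G →* ℂˣ)) :
    gaussMap s t χ⁻¹ = (gaussMap s t χ)⁻¹ := by
  funext v
  ext x
  simp only [gaussMap, Pi.inv_apply, MonoidHom.mul_apply, MonoidHom.finset_prod_apply,
    MonoidHom.inv_apply]
  simp [mul_inv, Finset.prod_inv_distrib, inv_inv, mul_comm, mul_left_comm, mul_assoc]

end Aux

section Aux2

variable (s t : L → V)

/-- The bijection of link configurations induced by a gauge transformation. -/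
def gaugeEquiv (g : V → G) : (L → G) ≃ (L → G) where
  toFun a := fun ℓ => (g (s ℓ))⁻¹ * a ℓ * g (t ℓ)
  invFun a := fun ℓ => g (s ℓ) * a ℓ * (g (t ℓ))⁻¹
  left_inv a := by funext ℓ; group
  right_inv a := by funext ℓ; group

lemma exists_char_ne_one {x : G} (hx : x ≠ 1) : ∃ χ : G →* ℂˣ, χ x ≠ 1 := by
  have : NeZero ((Monoid.exponent G : ℂ)) :=
    ⟨Nat.cast_ne_zero.mpr Monoid.exponent_ne_zero_of_finite⟩
  exact CommGroup.exists_apply_ne_one_of_hasEnoughRootsOfUnity G ℂ hx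

lemma eq_zero_of_eq_mul {c S : ℂ} (hc : c ≠ 1) (h : S = c * S) : S = 0 := by
  have h2 : (c - 1) * S = 0 := by rw [sub_mul, one_mul, ← h, sub_self]
  rcases mul_eq_zero.mp h2 with h3 | h3
  · exact absurd (sub_eq_zero.mp h3) hc
  · exact h3

lemma exists_g0 {r : V → (G →* ℂˣ)} (hr : r ≠ 1) :
    ∃ g₀ : V → G, (∏ v, r v (g₀ v)) ≠ 1 := by
  obtain ⟨v₀, hv₀⟩ : ∃ v, r v ≠ 1 := by
    by_contra h; push_neg at h; exact hr (funext h)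
  obtain ⟨x₀, hx₀⟩ : ∃ x, r v₀ x ≠ 1 := by
    by_contra h; push_neg at h; exact hv₀ (MonoidHom.ext h)
  refine ⟨fun v => if v = v₀ then x₀ else 1, ?_⟩
  rw [Finset.prod_eq_single v₀ (fun v _ hv => by simp [hv])
    (fun h => absurd (Finset.mem_univ v₀) h)]
  simpa using hx₀

lemma char_sum_eq_zero {r : V → (G →* ℂˣ)} (hr : r ≠ 1) :
    ∑ g : V → G, ((∏ v, r v (g v) : ℂˣ) : ℂ) = 0 := by
  obtain ⟨g₀, hg₀⟩ := exists_g0 hr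
  have key : ∑ g : V → G, ((∏ v, r v (g v) : ℂˣ) : ℂ)
      = ((∏ v, r v (g₀ v) : ℂˣ) : ℂ) * ∑ g : V → G, ((∏ v, r v (g v) : ℂˣ) : ℂ) := by
    rw [Finset.mul_sum]
    refine Fintype.sum_equiv (Equiv.mulLeft g₀⁻¹) _ _ fun g => ?_
    rw [← Units.val_mul, ← Finset.prod_mul_distrib]
    congr 1
    refine Finset.prod_congr rfl fun v _ => ?_
    rw [← map_mul]
    congr 1
    simp
  exact eq_zero_of_eq_mul (fun h => hg₀ (Units.val_eq_one.mp h)) key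

lemma piPn_Wline_of_inv (χ : L → (G →* ℂˣ)) (f : (L → G) → ℂ)
    (hf : ∀ g : V → G, Ugauge s t g f = f) :
    piPn s t G (Wline χ f) =
      (((Fintype.card G : ℂ) ^ Fintype.card V)⁻¹ *
        ∑ g : V → G, ((∏ v, gaussMap s t χ v (g v) : ℂˣ) : ℂ)) • Wline χ f := by
  rw [piPn_apply]
  rw [Finset.sum_congr rfl fun g _ => by rw [Ugauge_Wline, hf g]]
  rw [← Finset.sum_smul, smul_smul]

lemma W_piPn_Winv (χ : L → (G →* ℂˣ)) (f : (L → G) → ℂ) :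
    Wline χ (piPn s t G (Wline χ⁻¹ f)) =
      ((Fintype.card G : ℂ) ^ Fintype.card V)⁻¹ •
        ∑ g : V → G, (((∏ v, gaussMap s t χ v (g v) : ℂˣ) : ℂ))⁻¹ • Ugauge s t g f := by
  rw [piPn_apply, Wline_smul, Wline_sum]
  congr 1
  refine Finset.sum_congr rfl fun g _ => ?_
  rw [Ugauge_Wline, Wline_smul, Wline_Wline,
    show χ * χ⁻¹ = 1 from mul_inv_cancel χ, Wline_one]
  congr 1
  have h1 : (∏ v, gaussMap s t χ⁻¹ v (g v)) = (∏ v, gaussMap s t χ v (g v))⁻¹ := by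
    rw [gaussMap_inv, ← Finset.prod_inv_distrib]
    exact Finset.prod_congr rfl fun v _ => rfl
  rw [h1, Units.val_inv_eq_inv_val]

lemma conj_val_inv (z : ℂˣ) (hz : (z : ℂ) ^ Fintype.card G = 1) :
    (starRingEnd ℂ) (z : ℂ) = ((z⁻¹ : ℂˣ) : ℂ) := by
  have hnorm : ‖(z : ℂ)‖ = 1 :=
    Complex.norm_eq_one_of_pow_eq_one hz Fintype.card_ne_zero
  rw [← Complex.inv_eq_conj hnorm, Units.val_inv_eq_inv_val]

lemma prod_char_pow_card (χ : L → (G →* ℂˣ)) (a : L → G) :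
    (∏ ℓ, χ ℓ (a ℓ)) ^ Fintype.card G = 1 := by
  rw [← Finset.prod_pow]
  rw [Finset.prod_congr rfl fun ℓ _ => by rw [← map_pow, pow_card_eq_one, map_one]]
  exact Finset.prod_const_one

lemma conj_W_coeff (χ : L → (G →* ℂˣ)) (a : L → G) :
    (starRingEnd ℂ) ((((∏ ℓ, χ ℓ (a ℓ))⁻¹ : ℂˣ)) : ℂ) = ((∏ ℓ, χ ℓ (a ℓ) : ℂˣ) : ℂ) := by
  have h : (((∏ ℓ, χ ℓ (a ℓ))⁻¹ : ℂˣ) : ℂ) ^ Fintype.card G = 1 := by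
    rw [← Units.val_pow_eq_pow_val, inv_pow, prod_char_pow_card, inv_one, Units.val_one]
  rw [conj_val_inv ((∏ ℓ, χ ℓ (a ℓ))⁻¹) h, inv_inv]

lemma conj_prod_char (χ : L → (G →* ℂˣ)) (a : L → G) :
    (starRingEnd ℂ) ((∏ ℓ, χ ℓ (a ℓ) : ℂˣ) : ℂ) = (((∏ ℓ, χ ℓ (a ℓ) : ℂˣ) : ℂ))⁻¹ := by
  have hz : ((∏ ℓ, χ ℓ (a ℓ) : ℂˣ) : ℂ) ^ Fintype.card G = 1 := by
    rw [← Units.val_pow_eq_pow_val, prod_char_pow_card, Units.val_one]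
  rw [conj_val_inv _ hz, Units.val_inv_eq_inv_val]

lemma prod_apply_const {q : V → (G →* ℂˣ)} (hq : ∏ v, q v = 1) {g : V → G}
    (hg : ∀ v w, g v = g w) : (∏ v, q v (g v)) = 1 := by
  rcases isEmpty_or_nonempty V with hV | hV
  · simp
  · obtain ⟨v₀⟩ := hV
    rw [Finset.prod_congr rfl fun v _ => by rw [hg v v₀]]
    rw [← MonoidHom.finset_prod_apply, hq, MonoidHom.one_apply]

end Aux2

set_option maxHeartbeats 1000000 in
/-- Maximal correctable error sets from global sections of the Gauss law map: given a
section `sec` of the Gauss law map over the neutral charge configurations, (i) the Wilson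
line errors `{W^{sec q}}` satisfy the Knill–Laflamme condition with matrix `C` the
identity, and (ii) the error spaces `W^{sec q}(H_pn)` are pairwise orthogonal and their
sum is all of `H`, so the error set is maximal. -/
theorem section_gives_maximal_correctable_set (s t : L → V)
    (sec : (V → (G →* ℂˣ)) → (L → (G →* ℂˣ)))
    (hsec : ∀ q : V → (G →* ℂˣ), (∏ v, q v) = 1 → gaussMap s t (sec q) = q) :
    (∀ q q' : V → (G →* ℂˣ), (∏ v, q v) = 1 → (∏ v, q' v) = 1 →
        (q = q' →
          piPn s t G ∘ Wline (sec q)⁻¹ ∘ Wline (sec q') ∘ piPn s t G = piPn s t G) ∧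
        (q ≠ q' →
          piPn s t G ∘ Wline (sec q)⁻¹ ∘ Wline (sec q') ∘ piPn s t G = 0)) ∧
      (∀ q q' : V → (G →* ℂˣ), (∏ v, q v) = 1 → (∏ v, q' v) = 1 → q ≠ q' →
        ∀ f ∈ Wline (sec q) '' Hpn s t G, ∀ f' ∈ Wline (sec q') '' Hpn s t G,
          ∑ a : L → G, (starRingEnd ℂ) (f a) * f' a = 0) ∧
      (⨆ q ∈ {q : V → (G →* ℂˣ) | (∏ v, q v) = 1},
        Submodule.span ℂ (Wline (sec q) '' Hpn s t G)) = ⊤ := by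
  classical
  refine ⟨?_, ?_, ?_⟩
  · -- Knill–Laflamme condition
    intro q q' hq hq'
    constructor
    · rintro rfl
      funext f
      simp only [Function.comp_apply]
      rw [Wline_inv_cancel, piPn_idem]
    · intro hne
      have hr : (q⁻¹ * q' : V → (G →* ℂˣ)) ≠ 1 := by
        intro hE
        exact hne (inv_mul_eq_one.mp hE)
      funext f
      simp only [Function.comp_apply, Pi.zero_apply]
      rw [Wline_Wline]
      rw [piPn_Wline_of_inv s t _ _ (fun g => Ugauge_piPn s t g f)]
      have hg : gaussMap s t ((sec q)⁻¹ * sec q') = q⁻¹ * q' := by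
        rw [gaussMap_mul, gaussMap_inv, hsec q hq, hsec q' hq']
      rw [hg, char_sum_eq_zero hr, mul_zero, zero_smul]
  · -- orthogonality of error spaces
    intro q q' hq hq' hne f hf f' hf'
    obtain ⟨h, hh, rfl⟩ := hf
    obtain ⟨h', hh', rfl⟩ := hf'
    have hhg : ∀ g : V → G, Ugauge s t g h = h := hh
    have hh'g : ∀ g : V → G, Ugauge s t g h' = h' := hh'
    have hr : (q * q'⁻¹ : V → (G →* ℂˣ)) ≠ 1 := fun hE => hne (mul_inv_eq_one.mp hE)
    obtain ⟨g₀, hg₀⟩ := exists_g0 (r := q * q'⁻¹) hr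
    -- abbreviations
    set Pq : (L → G) → ℂˣ := fun a => ∏ ℓ, sec q ℓ (a ℓ) with hPq
    set Pq' : (L → G) → ℂˣ := fun a => ∏ ℓ, sec q' ℓ (a ℓ) with hPq'
    set F : (L → G) → ℂ := fun a =>
      ((Pq a : ℂˣ) : ℂ) * (((Pq' a : ℂˣ) : ℂ))⁻¹ * ((starRingEnd ℂ) (h a) * h' a) with hF
    have term : ∀ a : L → G,
        (starRingEnd ℂ) (Wline (sec q) h a) * Wline (sec q') h' a = F a := by
      intro a
      simp only [Wline, smul_eq_mul, Units.val_inv_eq_inv_val, map_mul, map_inv₀,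
        conj_prod_char, inv_inv, hF, hPq, hPq']
      ring
    rw [Finset.sum_congr rfl fun a _ => term a]
    -- the shift coefficient
    set Aq : ℂˣ := ∏ v, q v (g₀ v) with hAq
    set Aq' : ℂˣ := ∏ v, q' v (g₀ v) with hAq'
    have hAsplit : (∏ v, (q * q'⁻¹) v (g₀ v)) = Aq * Aq'⁻¹ := by
      rw [hAq, hAq', ← Finset.prod_inv_distrib, ← Finset.prod_mul_distrib]
      exact Finset.prod_congr rfl fun v _ => rfl
    have hcne : ((Aq : ℂ) * ((Aq' : ℂ))⁻¹) ≠ 1 := by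
      intro hE
      apply hg₀
      rw [hAsplit]
      apply Units.val_eq_one.mp
      rw [Units.val_mul, Units.val_inv_eq_inv_val]
      exact hE
    -- key identity via reindexing
    have key : ∑ a : L → G, F a = ((Aq : ℂ) * ((Aq' : ℂ))⁻¹) * ∑ a : L → G, F a := by
      rw [Finset.mul_sum]
      refine Fintype.sum_equiv (gaugeEquiv s t g₀) _ _ fun a => ?_
      -- compute F (gaugeEquiv a)
      have hφ : ∀ b : L → G,
          (gaugeEquiv s t g₀) b = fun ℓ => (g₀ (s ℓ))⁻¹ * b ℓ * g₀ (t ℓ) := fun b => rfl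
      have e1 : Pq ((gaugeEquiv s t g₀) a) = Aq⁻¹ * Pq a := by
        rw [hφ, hPq, hAq]
        simp only
        rw [prod_char_gauge s t (sec q) g₀ a, hsec q hq]
      have e2 : Pq' ((gaugeEquiv s t g₀) a) = Aq'⁻¹ * Pq' a := by
        rw [hφ, hPq', hAq']
        simp only
        rw [prod_char_gauge s t (sec q') g₀ a, hsec q' hq']
      have e3 : h ((gaugeEquiv s t g₀) a) = h a := congrFun (hhg g₀) a
      have e4 : h' ((gaugeEquiv s t g₀) a) = h' a := congrFun (hh'g g₀) a
      rw [hF]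
      simp only
      rw [e1, e2, e3, e4]
      simp only [Units.val_mul, Units.val_inv_eq_inv_val]
      have n1 : ((Aq : ℂ)) ≠ 0 := Units.ne_zero _
      have n2 : ((Aq' : ℂ)) ≠ 0 := Units.ne_zero _
      have n3 : ((Pq' a : ℂ)) ≠ 0 := Units.ne_zero _
      field_simp
    exact eq_zero_of_eq_mul hcne key
  · -- maximality
    have hfinite : Finite (G →* ℂˣ) := by
      have : NeZero ((Monoid.exponent G : ℂ)) :=
        ⟨Nat.cast_ne_zero.mpr Monoid.exponent_ne_zero_of_finite⟩
      obtain ⟨e⟩ := CommGroup.monoidHom_mulEquiv_of_hasEnoughRootsOfUnity G ℂ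
      exact Finite.of_equiv G e.symm.toEquiv
    letI : Fintype (G →* ℂˣ) := Fintype.ofFinite _
    rw [eq_top_iff]
    intro f _
    set Q : Finset (V → (G →* ℂˣ)) := univ.filter (fun q => (∏ v, q v) = 1) with hQdef
    have e_mem : ∀ q ∈ Q, Wline (sec q) (piPn s t G (Wline (sec q)⁻¹ f)) ∈
        (⨆ q ∈ {q : V → (G →* ℂˣ) | (∏ v, q v) = 1},
          Submodule.span ℂ (Wline (sec q) '' Hpn s t G)) := by
      intro q hq
      have hq1 : (∏ v, q v) = 1 := (Finset.mem_filter.mp hq).2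
      refine Submodule.mem_iSup_of_mem q (Submodule.mem_iSup_of_mem hq1 ?_)
      exact Submodule.subset_span
        ⟨piPn s t G (Wline (sec q)⁻¹ f), fun g => Ugauge_piPn s t g _, rfl⟩
    have e_form : ∀ q ∈ Q, Wline (sec q) (piPn s t G (Wline (sec q)⁻¹ f)) =
        ((Fintype.card G : ℂ) ^ Fintype.card V)⁻¹ •
          ∑ g : V → G, (((∏ v, q v (g v) : ℂˣ) : ℂ))⁻¹ • Ugauge s t g f := by
      intro q hq
      have hq1 : (∏ v, q v) = 1 := (Finset.mem_filter.mp hq).2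
      rw [W_piPn_Winv, hsec q hq1]
    have Dconst : ∀ g : V → G, (∀ v w : V, g v = g w) →
        ∑ q ∈ Q, (((∏ v, q v (g v) : ℂˣ) : ℂ))⁻¹ = (Q.card : ℂ) := by
      intro g hgc
      have h1 : ∀ q ∈ Q, (((∏ v, q v (g v) : ℂˣ) : ℂ))⁻¹ = 1 := by
        intro q hq
        rw [prod_apply_const (Finset.mem_filter.mp hq).2 hgc, Units.val_one, inv_one]
      rw [Finset.sum_congr rfl h1, Finset.sum_const, nsmul_eq_mul, mul_one]
    have Dzero : ∀ g : V → G, (¬ ∀ v w : V, g v = g w) →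
        ∑ q ∈ Q, (((∏ v, q v (g v) : ℂˣ) : ℂ))⁻¹ = 0 := by
      intro g hg
      push_neg at hg
      obtain ⟨v, w, hvw⟩ := hg
      have hvw' : v ≠ w := fun hE => hvw (by rw [hE])
      have hx : g v * (g w)⁻¹ ≠ 1 := fun hE => hvw (mul_inv_eq_one.mp hE)
      obtain ⟨χ, hχ⟩ := exists_char_ne_one hx
      set q₀ : V → (G →* ℂˣ) := fun u => if u = v then χ else if u = w then χ⁻¹ else 1
        with hq₀def
      have hv1 : q₀ v = χ := by simp [hq₀def]
      have hw1 : q₀ w = χ⁻¹ := by simp [hq₀def, Ne.symm hvw']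
      have hout : ∀ u, u ≠ v → u ≠ w → q₀ u = 1 := by
        intro u h1 h2; simp [hq₀def, h1, h2]
      have hq₀prod : (∏ u, q₀ u) = 1 := by
        have hsub : (∏ u, q₀ u) = ∏ u ∈ ({v, w} : Finset V), q₀ u :=
          (Finset.prod_subset (Finset.subset_univ _) (fun u _ hu => by
            rw [Finset.mem_insert, Finset.mem_singleton] at hu
            push_neg at hu
            exact hout u hu.1 hu.2)).symm
        rw [hsub, Finset.prod_pair hvw', hv1, hw1, mul_inv_cancel χ]
      have hq₀g : (∏ u, q₀ u (g u)) ≠ 1 := by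
        have hsub : (∏ u, q₀ u (g u)) = ∏ u ∈ ({v, w} : Finset V), q₀ u (g u) :=
          (Finset.prod_subset (Finset.subset_univ _) (fun u _ hu => by
            rw [Finset.mem_insert, Finset.mem_singleton] at hu
            push_neg at hu
            rw [hout u hu.1 hu.2, MonoidHom.one_apply])).symm
        rw [hsub, Finset.prod_pair hvw', hv1, hw1]
        intro hE
        apply hχ
        rw [map_mul, map_inv]
        exact hE
      have hinv1 : (∏ u, (q₀ u)⁻¹) = 1 := by
        ext x
        rw [MonoidHom.finset_prod_apply, MonoidHom.one_apply]
        have hev : ∀ u, ((q₀ u)⁻¹ : G →* ℂˣ) x = (q₀ u x)⁻¹ := fun u => rfl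
        rw [Finset.prod_congr rfl fun u _ => hev u, Finset.prod_inv_distrib,
          ← MonoidHom.finset_prod_apply, hq₀prod, MonoidHom.one_apply, inv_one]
      have step : ∀ qq : V → (G →* ℂˣ), (∏ u, (q₀⁻¹ * qq) u) = ∏ u, qq u := by
        intro qq
        calc (∏ u, (q₀⁻¹ * qq) u) = ∏ u, ((q₀ u)⁻¹ * qq u) :=
              Finset.prod_congr rfl fun u _ => rfl
          _ = (∏ u, (q₀ u)⁻¹) * ∏ u, qq u := Finset.prod_mul_distrib
          _ = ∏ u, qq u := by rw [hinv1]; exact one_mul (∏ u, qq u)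
      have Bmul : ∀ qq : V → (G →* ℂˣ),
          (∏ u, (q₀⁻¹ * qq) u (g u)) = (∏ u, q₀ u (g u))⁻¹ * ∏ u, qq u (g u) := by
        intro qq
        calc (∏ u, (q₀⁻¹ * qq) u (g u)) = ∏ u, ((q₀ u (g u))⁻¹ * qq u (g u)) :=
              Finset.prod_congr rfl fun u _ => rfl
          _ = (∏ u, (q₀ u (g u))⁻¹) * ∏ u, qq u (g u) := Finset.prod_mul_distrib
          _ = (∏ u, q₀ u (g u))⁻¹ * ∏ u, qq u (g u) := by rw [Finset.prod_inv_distrib]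
      have key : ∑ qq ∈ Q, (((∏ u, qq u (g u) : ℂˣ) : ℂ))⁻¹
          = (((∏ u, q₀ u (g u) : ℂˣ) : ℂ))⁻¹ *
            ∑ qq ∈ Q, (((∏ u, qq u (g u) : ℂˣ) : ℂ))⁻¹ := by
        rw [Finset.mul_sum]
        refine Finset.sum_equiv (Equiv.mulLeft q₀⁻¹) (fun qq => ?_) (fun qq hq => ?_)
        · simp only [hQdef, Finset.mem_filter, Finset.mem_univ, true_and,
            Equiv.coe_mulLeft]
          rw [step qq]
        · simp only [Equiv.coe_mulLeft]
          rw [Bmul qq]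
          simp only [Units.val_mul, Units.val_inv_eq_inv_val]
          rw [_root_.mul_inv, inv_inv, inv_mul_cancel_left₀ (Units.ne_zero _)]
      exact eq_zero_of_eq_mul
        (fun hE => hq₀g (Units.val_eq_one.mp (inv_eq_one.mp hE))) key
    -- total sum
    have hterm : ∀ g : V → G,
        (∑ q ∈ Q, (((∏ v, q v (g v) : ℂˣ) : ℂ))⁻¹) • Ugauge s t g f
        = if (∀ v w : V, g v = g w) then (Q.card : ℂ) • f else 0 := by
      intro g
      by_cases hg : ∀ v w : V, g v = g w
      · rw [if_pos hg, Dconst g hg, Ugauge_of_const s t hg f]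
      · rw [if_neg hg, Dzero g hg, zero_smul]
    have total : (∑ q ∈ Q, Wline (sec q) (piPn s t G (Wline (sec q)⁻¹ f)))
        = (((Fintype.card G : ℂ) ^ Fintype.card V)⁻¹ *
            (((univ.filter (fun g : V → G => ∀ v w : V, g v = g w)).card : ℂ) *
              (Q.card : ℂ))) • f := by
      rw [Finset.sum_congr rfl e_form, ← Finset.smul_sum, Finset.sum_comm]
      rw [Finset.sum_congr rfl fun g _ => (Finset.sum_smul).symm]
      rw [Finset.sum_congr rfl fun g _ => hterm g]
      rw [← Finset.sum_filter, Finset.sum_const, ← Nat.cast_smul_eq_nsmul ℂ,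
        smul_smul, smul_smul, mul_assoc]
    have hPne : ((univ.filter (fun g : V → G => ∀ v w : V, g v = g w)).card : ℂ) ≠ 0 := by
      refine Nat.cast_ne_zero.mpr (Finset.card_ne_zero_of_mem (a := fun _ => (1 : G)) ?_)
      exact Finset.mem_filter.mpr ⟨Finset.mem_univ _, fun v w => rfl⟩
    have hQne : ((Q.card : ℂ)) ≠ 0 := by
      refine Nat.cast_ne_zero.mpr (Finset.card_ne_zero_of_mem (a := (1 : V → (G →* ℂˣ))) ?_)
      exact Finset.mem_filter.mpr ⟨Finset.mem_univ _, Finset.prod_const_one⟩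
    set C : ℂ := ((Fintype.card G : ℂ) ^ Fintype.card V)⁻¹ *
      (((univ.filter (fun g : V → G => ∀ v w : V, g v = g w)).card : ℂ) *
        (Q.card : ℂ)) with hCdef
    have hCne : C ≠ 0 :=
      mul_ne_zero (inv_ne_zero cardc_ne_zero) (mul_ne_zero hPne hQne)
    have hfeq : f = C⁻¹ • ∑ q ∈ Q, Wline (sec q) (piPn s t G (Wline (sec q)⁻¹ f)) := by
      rw [total, smul_smul, inv_mul_cancel₀ hCne, one_smul]
    rw [hfeq]
    exact Submodule.smul_mem _ _ (Submodule.sum_mem _ fun q hq => e_mem q hq)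
end

section
/- (Unitary equivalence of the vacuum code with the pure gauge Gauss law code for finite G.) Define Φ : ((L → G) → ℂ) → (X → ℂ) by (Φ f) (a, m) := ((Real.sqrt |G|) ^ |V|)⁻¹ • f (fun ℓ => (m (s ℓ))⁻¹ * a ℓ * m (t ℓ)). Then Φ is a linear isometry (with respect to the standard inner products), and its range is exactly the subspace of gauge-invariant functions {F : X → ℂ | F (g • x) = F x for all g : V → G and all x ∈ X}. Hence the gauge-invariant sector of the matter-coupled theory, which is the physical space of the vacuum code, is unitarily equivalent to the kinematical space (L → G) → ℂ of the pure gauge Gauss law code. -/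
/-!
The map `x = (a, m) ↦ (m (s ℓ))⁻¹ * a ℓ * m (t ℓ)` reads off the link field in the unitary
gauge `m = 1`. Together with `x ↦ m` it is a bijection of `X`, and it is constant exactly on gauge
orbits, since the gauge parameter `m⁻¹` moves `x` to `(unitaryGauge x, 1)`. Hence `Φ f` is
`|G|^(-|V|/2)` times the pull-back of `f`: it is gauge invariant, the normalisation cancels the
`|G|^|V|` points of each fibre in the inner product, and every gauge-invariant `F` is the
pull-back of `b ↦ F (b, 1)`.
-/

open Finset

variable {V L : Type*} [Fintype V] [Fintype L] [DecidableEq V] [DecidableEq L]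
variable {G : Type*} [CommGroup G] [Fintype G]

/-- The action of a gauge parameter `g : V → G` on combined gauge-field/matter
configurations `X = (L → G) × (V → G)`. -/
def gaugeAct (s t : L → V) (g : V → G) (x : (L → G) × (V → G)) :
    (L → G) × (V → G) :=
  (fun ℓ => g (s ℓ) * x.1 ℓ * (g (t ℓ))⁻¹, fun v => g v * x.2 v)

/-- The map `Φ` embedding the pure gauge kinematical space into the matter-coupled
configuration space. -/
noncomputable def Phi (s t : L → V) (G : Type*) [CommGroup G] [Fintype G] :
    ((L → G) → ℂ) → (((L → G) × (V → G)) → ℂ) :=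
  fun f x => ((Real.sqrt (Fintype.card G) ^ Fintype.card V)⁻¹ : ℝ) •
    f fun ℓ => (x.2 (s ℓ))⁻¹ * x.1 ℓ * x.2 (t ℓ)

theorem inv_sqrt_pow_sq_mul_pow {r : ℝ} (hr : 0 < r) (k : ℕ) :
    (√r ^ k)⁻¹ ^ 2 * r ^ k = 1 := by
  rw [inv_pow, ← pow_mul, mul_comm k, pow_mul, Real.sq_sqrt hr.le,
    inv_mul_cancel₀ (by positivity)]

section GaugeFixing

omit [Fintype V] [Fintype L] [DecidableEq V] [DecidableEq L] [Fintype G]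

def unitaryGauge (s t : L → V) (x : (L → G) × (V → G)) : L → G :=
  fun ℓ => (x.2 (s ℓ))⁻¹ * x.1 ℓ * x.2 (t ℓ)

theorem unitaryGauge_gaugeAct (s t : L → V) (g : V → G) (x : (L → G) × (V → G)) :
    unitaryGauge s t (gaugeAct s t g x) = unitaryGauge s t x := by
  funext ℓ
  simp only [unitaryGauge, gaugeAct]
  group

theorem gaugeAct_inv_snd (s t : L → V) (x : (L → G) × (V → G)) :
    gaugeAct s t x.2⁻¹ x = (unitaryGauge s t x, 1) := by
  ext i <;> simp only [gaugeAct, unitaryGauge, Pi.inv_apply, inv_inv, inv_mul_cancel, Pi.one_apply]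

def unitaryGaugeEquiv (s t : L → V) : (L → G) × (V → G) ≃ (L → G) × (V → G) where
  toFun x := (unitaryGauge s t x, x.2)
  invFun y := gaugeAct s t y.2 (y.1, 1)
  left_inv x := by
    ext i <;> simp only [gaugeAct, unitaryGauge, Pi.one_apply, mul_one]
    group
  right_inv y := by
    ext i <;> simp only [gaugeAct, unitaryGauge, Pi.one_apply, mul_one]
    group

end GaugeFixing

theorem sum_comp_unitaryGauge {M : Type*} [AddCommMonoid M] (s t : L → V) (h : (L → G) → M) :
    ∑ x, h (unitaryGauge s t x) = Fintype.card (V → G) • ∑ b, h b := by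
  calc ∑ x, h (unitaryGauge s t x)
      = ∑ y : (L → G) × (V → G), h y.1 := (unitaryGaugeEquiv s t).sum_comp fun y => h y.1
    _ = ∑ b, ∑ _m : V → G, h b := Fintype.sum_prod_type _
    _ = Fintype.card (V → G) • ∑ b, h b := by simp only [sum_const, card_univ, smul_sum]

omit [Fintype L] [DecidableEq V] [DecidableEq L] in
theorem Phi_apply (s t : L → V) (f : (L → G) → ℂ) (x : (L → G) × (V → G)) :
    Phi s t G f x =
      ((√(Fintype.card G) ^ Fintype.card V)⁻¹ : ℝ) • f (unitaryGauge s t x) :=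
  rfl

omit [Fintype L] [DecidableEq V] [DecidableEq L] in
theorem isLinearMap_Phi (s t : L → V) : IsLinearMap ℂ (Phi s t G) :=
  ⟨fun _ _ => funext fun _ => smul_add _ _ _,
    fun r _ => funext fun _ => smul_comm (_ : ℝ) r (_ : ℂ)⟩

theorem sum_conj_Phi_mul_Phi (s t : L → V) (f₁ f₂ : (L → G) → ℂ) :
    ∑ x, (starRingEnd ℂ) (Phi s t G f₁ x) * Phi s t G f₂ x =
      ∑ a, (starRingEnd ℂ) (f₁ a) * f₂ a := by
  set c : ℝ := (√(Fintype.card G) ^ Fintype.card V)⁻¹ with hc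
  have hG : (0 : ℝ) < Fintype.card G := by exact_mod_cast Fintype.card_pos
  calc ∑ x, (starRingEnd ℂ) (Phi s t G f₁ x) * Phi s t G f₂ x
      = ∑ x, ((c ^ 2 : ℝ) : ℂ) *
          ((starRingEnd ℂ) (f₁ (unitaryGauge s t x)) * f₂ (unitaryGauge s t x)) := by
        simp only [Phi_apply, ← hc, Complex.real_smul, map_mul, Complex.conj_ofReal]
        push_cast
        ring_nf
    _ = ((c ^ 2 * Fintype.card G ^ Fintype.card V : ℝ) : ℂ) *
          ∑ a, (starRingEnd ℂ) (f₁ a) * f₂ a := by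
        rw [← mul_sum, sum_comp_unitaryGauge s t fun a => (starRingEnd ℂ) (f₁ a) * f₂ a,
          Fintype.card_fun, nsmul_eq_mul]
        push_cast
        ring
    _ = ∑ a, (starRingEnd ℂ) (f₁ a) * f₂ a := by
        rw [inv_sqrt_pow_sq_mul_pow hG, Complex.ofReal_one, one_mul]

omit [Fintype L] [DecidableEq V] [DecidableEq L] in
theorem range_Phi (s t : L → V) :
    Set.range (Phi s t G) =
      {F | ∀ (g : V → G) (x : (L → G) × (V → G)), F (gaugeAct s t g x) = F x} := by
  set c : ℝ := (√(Fintype.card G) ^ Fintype.card V)⁻¹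
  have hc : c ≠ 0 := by
    have : (0 : ℝ) < Fintype.card G := by exact_mod_cast Fintype.card_pos
    positivity
  ext F
  constructor
  · rintro ⟨f, rfl⟩ g x
    simp only [Phi_apply, unitaryGauge_gaugeAct]
  · intro hF
    refine ⟨fun b => c⁻¹ • F (b, 1), funext fun x => ?_⟩
    rw [Phi_apply, smul_smul, mul_inv_cancel₀ hc, one_smul, ← gaugeAct_inv_snd, hF]

/-- Unitary equivalence of the vacuum code with the pure gauge Gauss law code for finite
`G`: `Φ` is a linear isometry whose range is exactly the subspace of gauge-invariant
functions on `X = (L → G) × (V → G)`. -/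
theorem vacuum_code_unitary_equivalence (s t : L → V) :
    IsLinearMap ℂ (Phi s t G) ∧
      (∀ f₁ f₂ : (L → G) → ℂ,
        ∑ x : (L → G) × (V → G),
            (starRingEnd ℂ) (Phi s t G f₁ x) * Phi s t G f₂ x =
          ∑ a : L → G, (starRingEnd ℂ) (f₁ a) * f₂ a) ∧
      Set.range (Phi s t G) =
        {F : ((L → G) × (V → G)) → ℂ |
          ∀ (g : V → G) (x : (L → G) × (V → G)), F (gaugeAct s t g x) = F x} :=
  ⟨isLinearMap_Phi s t, sum_conj_Phi_mul_Phi s t, range_Phi s t⟩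
end

section
/- (Sign relating the Jordan–Wigner basis to tensor matrix units, Appendix A.) Work in M_n := Matrix (Fin n → Fin 2) (Fin n → Fin 2) ℂ. For ν, ν' : Fin 2 and j : Fin n, let Γ̃_j(ν, ν') ∈ M_n be the matrix whose (μ⃗, λ⃗) entry equals (−1)^{((ν : ℕ) + (ν' : ℕ)) * card {k : Fin n | k < j ∧ λ⃗ k = 1}} if μ⃗ j = ν, λ⃗ j = ν', and μ⃗ k = λ⃗ k for all k ≠ j, and equals 0 otherwise (this is the string Z^{ν+ν'} ⊗ ⋯ ⊗ Z^{ν+ν'} ⊗ E^{ν,ν'} ⊗ I ⊗ ⋯ ⊗ I with the matrix unit E^{ν,ν'} in slot j). Then for all ν⃗, ν⃗' : Fin n → Fin 2, the ordered product ∏_{j = 0}^{n−1} Γ̃_j(ν⃗ j, ν⃗' j) (taken in increasing order of j) equals (−1)^{∑_{j} (ν⃗' j : ℕ) * ∑_{k > j} ((ν⃗ k : ℕ) + (ν⃗' k : ℕ))} • Matrix.stdBasisMatrix ν⃗ ν⃗' 1. -/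
open Finset

/-- The Jordan–Wigner string matrix `Γ̃_j(ν, ν')`: the string
`Z^{ν+ν'} ⊗ ⋯ ⊗ Z^{ν+ν'} ⊗ E^{ν,ν'} ⊗ I ⊗ ⋯ ⊗ I` with the matrix unit `E^{ν,ν'}` in
slot `j`. -/
def gammaTilde (n : ℕ) (j : Fin n) (ν ν' : Fin 2) :
    Matrix (Fin n → Fin 2) (Fin n → Fin 2) ℂ :=
  Matrix.of fun μ lam =>
    if μ j = ν ∧ lam j = ν' ∧ ∀ k : Fin n, k ≠ j → μ k = lam k then
      (-1 : ℂ) ^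
        (((ν : ℕ) + (ν' : ℕ)) * (univ.filter fun k : Fin n => k < j ∧ lam k = 1).card)
    else 0

lemma jw_aux (n : ℕ) (ν ν' : Fin n → Fin 2) : ∀ (m : ℕ), m ≤ n →
    (((List.finRange n).take m).map fun j => gammaTilde n j (ν j) (ν' j)).prod =
    Matrix.of (fun μ lam =>
      if (∀ j : Fin n, (j : ℕ) < m → μ j = ν j) ∧ (∀ j : Fin n, (j : ℕ) < m → lam j = ν' j)
         ∧ (∀ k : Fin n, m ≤ (k : ℕ) → μ k = lam k) then
        (-1 : ℂ) ^ (∑ j ∈ univ.filter (fun j : Fin n => (j : ℕ) < m),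
            ((ν j : ℕ) + (ν' j : ℕ)) * (univ.filter fun k : Fin n => k < j ∧ ν' k = 1).card)
      else 0) := by
  intro m
  induction m with
  | zero =>
    intro _
    simp only [List.take_zero, List.map_nil, List.prod_nil]
    ext μ lam
    by_cases h : μ = lam
    · subst h
      simp [Matrix.one_apply]
    · rw [Matrix.one_apply_ne h]
      simp only [Matrix.of_apply]
      rw [if_neg]
      rintro ⟨-, -, h3⟩
      exact h (funext fun k => h3 k (Nat.zero_le _))
  | succ m ih =>
    intro hm
    have hmn : m < n := hm
    have hm' : m ≤ n := le_of_lt hmn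
    set jm : Fin n := ⟨m, hmn⟩ with hjm
    rw [show (List.finRange n).take (m+1) = (List.finRange n).take m ++ [jm] by
      rw [List.take_succ]; simp [List.getElem?_eq_getElem, hmn, hjm]]
    rw [List.map_append, List.prod_append, ih hm', List.map_singleton, List.prod_singleton]
    ext μ lam
    rw [Matrix.mul_apply]
    set σ0 : Fin n → Fin 2 := Function.update lam jm (ν jm) with hσ0
    have hupd_jm : σ0 jm = ν jm := Function.update_self _ _ _
    have hupd_ne : ∀ k : Fin n, k ≠ jm → σ0 k = lam k := fun k hk =>
      Function.update_of_ne hk _ _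
    have hjmval : (jm : ℕ) = m := rfl
    rw [Finset.sum_eq_single σ0 ?side ?notmem]
    case side =>
      intro σ _ hσ
      simp only [gammaTilde, Matrix.of_apply]
      have : ¬(σ jm = ν jm ∧ lam jm = ν' jm ∧ ∀ k : Fin n, k ≠ jm → σ k = lam k) := by
        rintro ⟨hb1, hb2, hb3⟩
        apply hσ
        funext k
        by_cases hk : k = jm
        · subst hk; rw [hb1, hupd_jm]
        · rw [hb3 k hk, hupd_ne k hk]
      rw [if_neg this, mul_zero]
    case notmem =>
      intro h; exact absurd (Finset.mem_univ σ0) h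
    -- main computation
    simp only [gammaTilde, Matrix.of_apply]
    by_cases hA : (∀ j : Fin n, (j : ℕ) < m → μ j = ν j) ∧ (∀ j : Fin n, (j : ℕ) < m → σ0 j = ν' j)
        ∧ (∀ k : Fin n, m ≤ (k : ℕ) → μ k = σ0 k)
    · obtain ⟨h1, h2, h3⟩ := hA
      by_cases hB : σ0 jm = ν jm ∧ lam jm = ν' jm ∧ ∀ k : Fin n, k ≠ jm → σ0 k = lam k
      · obtain ⟨hb1, hb2, hb3⟩ := hB
        have hC : (∀ j : Fin n, (j : ℕ) < m + 1 → μ j = ν j) ∧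
            (∀ j : Fin n, (j : ℕ) < m + 1 → lam j = ν' j) ∧
            (∀ k : Fin n, m + 1 ≤ (k : ℕ) → μ k = lam k) := by
          refine ⟨?_, ?_, ?_⟩
          · intro j hj
            rcases Nat.lt_succ_iff_lt_or_eq.mp hj with hj | hj
            · exact h1 j hj
            · have hje : j = jm := Fin.ext hj
              rw [hje, h3 jm (le_of_eq hjmval.symm), hupd_jm]
          · intro j hj
            rcases Nat.lt_succ_iff_lt_or_eq.mp hj with hj | hj
            · have hne : j ≠ jm := by
                intro h; rw [h] at hj; exact absurd hj (lt_irrefl m)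
              rw [← hupd_ne j hne]; exact h2 j hj
            · have hje : j = jm := Fin.ext hj
              rw [hje]; exact hb2
          · intro k hk
            have hne : k ≠ jm := by
              intro h; rw [h] at hk; simp [hjmval] at hk
            rw [h3 k (by omega), hupd_ne k hne]
        rw [if_pos ⟨h1, h2, h3⟩, if_pos ⟨hb1, hb2, hb3⟩, if_pos hC]
        obtain ⟨hc1, hc2, hc3⟩ := hC
        have hfilter : (univ.filter fun j : Fin n => (j : ℕ) < m + 1)
            = insert jm (univ.filter fun j : Fin n => (j : ℕ) < m) := by
          ext j
          simp only [Finset.mem_insert, Finset.mem_filter, Finset.mem_univ, true_and]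
          constructor
          · intro hj
            rcases Nat.lt_succ_iff_lt_or_eq.mp hj with hj | hj
            · exact Or.inr hj
            · exact Or.inl (Fin.ext hj)
          · rintro (h | h)
            · subst h; exact Nat.lt_succ_self m
            · exact Nat.lt_succ_of_lt h
        have hnotmem : jm ∉ (univ.filter fun j : Fin n => (j : ℕ) < m) := by
          simp [hjmval]
        rw [hfilter, Finset.sum_insert hnotmem, pow_add]
        have hcount : (univ.filter fun k : Fin n => k < jm ∧ lam k = 1)
            = (univ.filter fun k : Fin n => k < jm ∧ ν' k = 1) := by
          apply Finset.filter_congr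
          intro k _
          constructor
          · rintro ⟨hk, hk1⟩
            exact ⟨hk, by rw [← hc2 k (Nat.lt_succ_of_lt hk)]; exact hk1⟩
          · rintro ⟨hk, hk1⟩
            exact ⟨hk, by rw [hc2 k (Nat.lt_succ_of_lt hk)]; exact hk1⟩
        rw [hcount, mul_comm]
      · -- B fails, so C fails (lam jm ≠ ν' jm)
        have hC : ¬((∀ j : Fin n, (j : ℕ) < m + 1 → μ j = ν j) ∧
            (∀ j : Fin n, (j : ℕ) < m + 1 → lam j = ν' j) ∧
            (∀ k : Fin n, m + 1 ≤ (k : ℕ) → μ k = lam k)) := by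
          rintro ⟨hc1, hc2, hc3⟩
          exact hB ⟨hupd_jm, hc2 jm (by omega), hupd_ne⟩
        rw [if_neg hB, if_neg hC, mul_zero]
    · -- A fails, so C fails
      have hC : ¬((∀ j : Fin n, (j : ℕ) < m + 1 → μ j = ν j) ∧
          (∀ j : Fin n, (j : ℕ) < m + 1 → lam j = ν' j) ∧
          (∀ k : Fin n, m + 1 ≤ (k : ℕ) → μ k = lam k)) := by
        rintro ⟨hc1, hc2, hc3⟩
        apply hA
        refine ⟨fun j hj => hc1 j (Nat.lt_succ_of_lt hj), ?_, ?_⟩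
        · intro j hj
          have hne : j ≠ jm := by
            intro h; rw [h] at hj; exact absurd hj (by simp [hjmval])
          rw [hupd_ne j hne]; exact hc2 j (Nat.lt_succ_of_lt hj)
        · intro k hk
          by_cases hkj : k = jm
          · rw [hkj, hupd_jm]; exact hc1 jm (by simp [hjmval])
          · have : m + 1 ≤ (k : ℕ) := by
              rcases Nat.lt_or_ge (k : ℕ) (m+1) with h | h
              · exfalso; exact hkj (Fin.ext (by omega))
              · exact h
            rw [hupd_ne k hkj]; exact hc3 k this
      rw [if_neg hA, if_neg hC, zero_mul]

lemma jw_sign_eq (n : ℕ) (ν ν' : Fin n → Fin 2) :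
    ∑ j : Fin n, ((ν j : ℕ) + (ν' j : ℕ)) *
        (univ.filter fun k : Fin n => k < j ∧ ν' k = 1).card
    = ∑ j : Fin n, (ν' j : ℕ) *
        ∑ k ∈ univ.filter (fun k : Fin n => j < k), ((ν k : ℕ) + (ν' k : ℕ)) := by
  have hval : ∀ x : Fin 2, (if x = 1 then (1 : ℕ) else 0) = (x : ℕ) := by decide
  have hcard : ∀ j : Fin n, (univ.filter fun k : Fin n => k < j ∧ ν' k = 1).card
      = ∑ k : Fin n, if k < j then (ν' k : ℕ) else 0 := by
    intro j
    rw [Finset.card_filter]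
    apply Finset.sum_congr rfl
    intro k _
    by_cases h : k < j
    · simp only [h, true_and, if_true]
      exact hval (ν' k)
    · simp [h]
  calc ∑ j : Fin n, ((ν j : ℕ) + (ν' j : ℕ)) *
        (univ.filter fun k : Fin n => k < j ∧ ν' k = 1).card
      = ∑ j : Fin n, ∑ k : Fin n,
          (if k < j then ((ν j : ℕ) + (ν' j : ℕ)) * (ν' k : ℕ) else 0) := by
        apply Finset.sum_congr rfl
        intro j _
        rw [hcard, Finset.mul_sum]
        apply Finset.sum_congr rfl
        intro k _
        by_cases h : k < j <;> simp [h]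
    _ = ∑ k : Fin n, ∑ j : Fin n,
          (if k < j then ((ν j : ℕ) + (ν' j : ℕ)) * (ν' k : ℕ) else 0) := Finset.sum_comm
    _ = ∑ j : Fin n, (ν' j : ℕ) *
        ∑ k ∈ univ.filter (fun k : Fin n => j < k), ((ν k : ℕ) + (ν' k : ℕ)) := by
        apply Finset.sum_congr rfl
        intro k _
        rw [Finset.mul_sum, Finset.sum_filter]
        apply Finset.sum_congr rfl
        intro j _
        by_cases h : k < j <;> simp [h, mul_comm]

/-- Sign relating the Jordan–Wigner basis to tensor matrix units: the ordered product
`∏_{j=0}^{n-1} Γ̃_j(ν⃗ j, ν⃗' j)` (smaller `j` on the left) equals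
`(-1)^{∑_j (ν⃗' j) ∑_{k > j} (ν⃗ k + ν⃗' k)}` times the matrix unit `E_{ν⃗, ν⃗'}`. -/
theorem jordanWigner_product_sign (n : ℕ) (ν ν' : Fin n → Fin 2) :
    ((List.finRange n).map fun j => gammaTilde n j (ν j) (ν' j)).prod =
      ((-1 : ℂ) ^
          (∑ j : Fin n, (ν' j : ℕ) *
            ∑ k ∈ univ.filter fun k : Fin n => j < k, ((ν k : ℕ) + (ν' k : ℕ)))) •
        Matrix.single ν ν' 1 := by
  have h := jw_aux n ν ν' n le_rfl
  rw [List.take_of_length_le (by simp)] at h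
  rw [h]
  ext μ lam
  simp only [Matrix.of_apply, Matrix.smul_apply, Matrix.single, Matrix.of_apply,
    smul_eq_mul]
  have hfull : (univ.filter fun j : Fin n => (j : ℕ) < n) = (univ : Finset (Fin n)) := by
    apply Finset.filter_true_of_mem
    intro j _
    exact j.isLt
  by_cases hc : ν = μ ∧ ν' = lam
  · obtain ⟨h1, h2⟩ := hc
    subst h1; subst h2
    rw [if_pos ⟨fun _ _ => rfl, fun _ _ => rfl, fun k hk => absurd k.isLt (Nat.not_lt.mpr hk)⟩, if_pos ⟨rfl, rfl⟩, mul_one]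
    rw [hfull, jw_sign_eq]
  · rw [if_neg hc, if_neg, mul_zero]
    rintro ⟨h1, h2, -⟩
    exact hc ⟨(funext fun j => (h1 j j.isLt).symm), (funext fun j => (h2 j j.isLt).symm)⟩
end

section
/- (Highest-weight projector identity, Eq. (3.46) of the paper.) For every natural number D ≥ 2, the truncated annihilation operator a on ℂ^D satisfies (a†)^(D−1) * a^(D−1) = (D−1)! • E_{D−1, D−1}, where (D−1)! is the factorial and E_{D−1, D−1} is the matrix unit at the highest occupation level. -/
open Finset Matrix

/-- The truncated annihilation operator `a = ∑_{m=0}^{D-2} √(m+1) • E_{m, m+1}` on `ℂ^D`. -/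
noncomputable def annOp (D : ℕ) : Matrix (Fin D) (Fin D) ℂ :=
  ∑ m : Fin (D - 1),
    (Real.sqrt ((m : ℕ) + 1) : ℂ) •
      Matrix.single (⟨(m : ℕ), by have h := m.2; omega⟩ : Fin D)
        ⟨(m : ℕ) + 1, by have h := m.2; omega⟩ 1


lemma annOp_apply (D : ℕ) (i j : Fin D) :
    annOp D i j = if (j : ℕ) = (i : ℕ) + 1 then (Real.sqrt ((i:ℕ)+1) : ℂ) else 0 := by
  unfold annOp
  rw [Matrix.sum_apply]
  by_cases h : (j : ℕ) = (i : ℕ) + 1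
  · have hi : (i : ℕ) < D - 1 := by have := j.2; omega
    rw [Finset.sum_eq_single (⟨(i:ℕ), hi⟩ : Fin (D-1))]
    · simp [Matrix.single, Fin.ext_iff, h]
    · intro m _ hm
      simp only [Matrix.smul_apply, Matrix.single, Matrix.of_apply, smul_eq_mul]
      rw [if_neg]
      · ring
      · rintro ⟨h1, h2⟩
        have h1' := congrArg Fin.val h1
        exact hm (Fin.ext (by simp at h1' ⊢; omega))
    · simp
  · rw [if_neg h]
    apply Finset.sum_eq_zero
    intro m _
    simp only [Matrix.smul_apply, Matrix.single, Matrix.of_apply, smul_eq_mul]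
    rw [if_neg]
    · ring
    · rintro ⟨h1, h2⟩
      apply h
      have : (m:ℕ) = (i:ℕ) := by simpa [Fin.ext_iff] using h1
      have := congrArg Fin.val h2
      simp at this
      omega

lemma annOp_pow_apply (D : ℕ) (k : ℕ) (i j : Fin D) :
    (annOp D ^ k) i j =
      if (j : ℕ) = (i : ℕ) + k then
        (Real.sqrt (∏ t ∈ Finset.range k, ((i:ℕ) + 1 + t)) : ℂ) else 0 := by
  induction k generalizing i j with
  | zero => simp [Matrix.one_apply, Fin.ext_iff, eq_comm]
  | succ k ih =>
    rw [pow_succ', Matrix.mul_apply]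
    by_cases hi : (i : ℕ) + 1 < D
    · rw [Finset.sum_eq_single (⟨(i:ℕ)+1, hi⟩ : Fin D)]
      · rw [annOp_apply, ih]
        simp only [if_pos rfl, if_true]
        by_cases hj : (j : ℕ) = (i : ℕ) + (k + 1)
        · rw [if_pos (show (j:ℕ) = ((⟨(i:ℕ)+1, hi⟩ : Fin D):ℕ) + k by simp; omega),
            if_pos hj]
          rw [← Complex.ofReal_mul, ← Real.sqrt_mul (by positivity)]
          congr 2
          rw [Finset.prod_range_succ']
          rw [mul_comm]
          congr 1
          · apply Finset.prod_congr rfl; intro t _; push_cast; ring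
          · push_cast; ring
        · rw [if_neg (show ¬ (j:ℕ) = ((⟨(i:ℕ)+1, hi⟩ : Fin D):ℕ) + k by simp; omega),
            if_neg hj, mul_zero]
      · intro b _ hb
        rw [annOp_apply, if_neg, zero_mul]
        intro hb'
        exact hb (Fin.ext (by simpa using hb'))
      · simp
    · rw [if_neg (show ¬ (j:ℕ) = (i:ℕ) + (k+1) by have := j.2; omega)]
      apply Finset.sum_eq_zero
      intro l _
      rw [annOp_apply, if_neg (show ¬ (l:ℕ) = (i:ℕ) + 1 by have := l.2; omega), zero_mul]


/-- Highest-weight projector identity (Eq. (3.46)): for `D ≥ 2`,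
`(a†)^(D−1) * a^(D−1) = (D−1)! • E_{D−1, D−1}`. -/
theorem highest_weight_projector (D : ℕ) (hD : 2 ≤ D) :
    (annOp D)ᴴ ^ (D - 1) * annOp D ^ (D - 1) =
      (Nat.factorial (D - 1) : ℂ) •
        Matrix.single (⟨D - 1, by omega⟩ : Fin D) ⟨D - 1, by omega⟩ 1 := by
  ext i j
  rw [← Matrix.conjTranspose_pow, Matrix.mul_apply]
  have h0 : (0 : ℕ) < D := by omega
  by_cases hij : (i : ℕ) = D - 1 ∧ (j : ℕ) = D - 1
  · rw [Finset.sum_eq_single (⟨0, h0⟩ : Fin D)]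
    · rw [Matrix.conjTranspose_apply, annOp_pow_apply, annOp_pow_apply]
      rw [if_pos (by simp; omega), if_pos (by simp; omega)]
      simp only [Matrix.smul_apply, Matrix.single, Matrix.of_apply]
      rw [if_pos ⟨Fin.ext (by simp [hij.1]), Fin.ext (by simp [hij.2])⟩]
      rw [Complex.star_def, Complex.conj_ofReal, ← Complex.ofReal_mul,
        Real.mul_self_sqrt (by positivity)]
      norm_num
      have key : ∀ n:ℕ, (∏ x ∈ Finset.range n, ((1:ℂ) + (x:ℂ))) = (n.factorial : ℂ) := by
        intro n
        induction n with
        | zero => simp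
        | succ n ihn => rw [Finset.prod_range_succ, ihn, Nat.factorial_succ]; push_cast; ring
      exact key (D-1)
    · intro b _ hb
      rw [Matrix.conjTranspose_apply, annOp_pow_apply,
        if_neg (show ¬ (i:ℕ) = (b:ℕ) + (D-1) by
          intro h; exact hb (Fin.ext (by simp; omega))), star_zero, zero_mul]
    · simp
  · rw [Finset.sum_eq_zero]
    · simp only [Matrix.smul_apply, Matrix.single, Matrix.of_apply, smul_eq_mul]
      rw [if_neg (by
        rintro ⟨h1, h2⟩
        exact hij ⟨by simpa using congrArg Fin.val h1.symm,
          by simpa using congrArg Fin.val h2.symm⟩), mul_zero]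
    · intro l _
      by_cases hl : (i : ℕ) = (l : ℕ) + (D - 1)
      · rw [annOp_pow_apply (i := l) (j := j), if_neg, mul_zero]
        intro hj
        have := i.2; have := j.2
        exact hij ⟨by omega, by omega⟩
      · rw [Matrix.conjTranspose_apply, annOp_pow_apply, if_neg hl, star_zero, zero_mul]
end
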